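/- arXiv:math/0305399 — 5 statements merged into one kernel-verified Lean document; each statement's English description precedes it below -/
import Mathlib

section
/- Let E be a subset of the real line of Lebesgue measure zero, let s ∈ [0,1] and let K > 0. Suppose that for every open interval (a,b), the s-dimensional Hausdorff measure satisfies H^s(E ∩ (a,b)) ≤ K·(b−a)·H^s(E). Then H^s(E) is either 0 or ∞. -/
/-!
A measure `ν` on `ℝ` with `ν (a, b) ≤ C (b - a)` on every open interval satisfies `ν A ≤ C diam A`
on every bounded set, hence `ν ≤ C • μH[1] = C • volume`, so `ν ≪ volume`. Applied to
`ν = μH[s].restrict E` with `C = K μH[s](E)`: if `μH[s](E) < ∞` then `C < ∞`, and the Lebesgue-null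
set `E` is `ν`-null, i.e. `μH[s](E) = 0`.
-/

open MeasureTheory Set
open scoped ENNReal

namespace Real

section IntervalBound

variable {ν : Measure ℝ} {C : ℝ≥0∞}

theorem measure_Icc_le_of_forall_Ioo (hC : C ≠ ⊤)
    (h : ∀ a b, a < b → ν (Ioo a b) ≤ C * ENNReal.ofReal (b - a)) (a b : ℝ) :
    ν (Icc a b) ≤ C * ENNReal.ofReal (b - a) := by
  rcases lt_or_ge b a with hba | hab
  · simp [Icc_eq_empty_of_lt hba]
  have hcont : Continuous fun δ : ℝ ↦ C * ENNReal.ofReal (b - a + 2 * δ) :=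
    (ENNReal.continuous_const_mul hC).comp (ENNReal.continuous_ofReal.comp (by fun_prop))
  have hlim := (hcont.tendsto 0).mono_left (nhdsWithin_le_nhds (s := Ioi 0))
  simp only [mul_zero, add_zero] at hlim
  refine ge_of_tendsto hlim ?_
  filter_upwards [self_mem_nhdsWithin] with δ (hδ : 0 < δ)
  calc ν (Icc a b) ≤ ν (Ioo (a - δ) (b + δ)) :=
        measure_mono (Icc_subset_Ioo (by linarith) (by linarith))
    _ ≤ C * ENNReal.ofReal (b + δ - (a - δ)) := h _ _ (by linarith)
    _ = C * ENNReal.ofReal (b - a + 2 * δ) := by ring_nf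

theorem measure_le_mul_ediam_of_forall_Ioo (hC : C ≠ ⊤)
    (h : ∀ a b, a < b → ν (Ioo a b) ≤ C * ENNReal.ofReal (b - a)) {A : Set ℝ}
    (hA : Bornology.IsBounded A) : ν A ≤ C * Metric.ediam A :=
  calc ν A ≤ ν (Icc (sInf A) (sSup A)) :=
        measure_mono (subset_Icc_csInf_csSup hA.bddBelow hA.bddAbove)
    _ ≤ C * ENNReal.ofReal (sSup A - sInf A) := measure_Icc_le_of_forall_Ioo hC h _ _
    _ = C * Metric.ediam A := by rw [Real.ediam_eq hA]

theorem measure_le_smul_volume_of_forall_Ioo (hC₀ : C ≠ 0) (hC : C ≠ ⊤)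
    (h : ∀ a b, a < b → ν (Ioo a b) ≤ C * ENNReal.ofReal (b - a)) : ν ≤ C • volume :=
  calc ν ≤ Measure.mkMetric (C * ·) :=
        Measure.le_mkMetric _ ν 1 one_pos fun A hA ↦ measure_le_mul_ediam_of_forall_Ioo hC h
          (Metric.isBounded_iff_ediam_ne_top.2 (ne_top_of_le_ne_top ENNReal.one_ne_top hA))
    _ ≤ C • μH[1] :=
        Measure.mkMetric_mono_smul hC hC₀ (Filter.Eventually.of_forall fun r ↦ by simp)
    _ = C • volume := by rw [hausdorffMeasure_real]

theorem absolutelyContinuous_volume_of_forall_Ioo (hC : C ≠ ⊤)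
    (h : ∀ a b, a < b → ν (Ioo a b) ≤ C * ENNReal.ofReal (b - a)) : ν ≪ volume :=
  Measure.absolutelyContinuous_of_le_smul <|
    measure_le_smul_volume_of_forall_Ioo (C := C + 1) (by simp) (by simpa using hC)
      fun a b hab ↦ (h a b hab).trans (by gcongr; exact le_self_add)

end IntervalBound

theorem measure_eq_zero_of_forall_inter_Ioo {μ : Measure ℝ} {C : ℝ≥0∞} {E : Set ℝ}
    (hC : C ≠ ⊤) (hE : volume E = 0)
    (h : ∀ a b, a < b → μ (E ∩ Ioo a b) ≤ C * ENNReal.ofReal (b - a)) : μ E = 0 := by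
  have hac : μ.restrict E ≪ volume := absolutelyContinuous_volume_of_forall_Ioo hC fun a b hab ↦ by
    rw [Measure.restrict_apply measurableSet_Ioo, inter_comm]
    exact h a b hab
  exact nonpos_iff_eq_zero.1 <| (inter_self E ▸ Measure.le_restrict_apply E E).trans_eq (hac hE)

end Real

theorem stmt0_general (E : Set ℝ) (s K : ℝ)
    (hE : volume E = 0)
    (h : ∀ a b : ℝ, a < b →
      μH[s] (E ∩ Set.Ioo a b) ≤ ENNReal.ofReal (K * (b - a)) * μH[s] E) :
    μH[s] E = 0 ∨ μH[s] E = ⊤ := by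
  refine or_iff_not_imp_right.2 fun hfin ↦ ?_
  refine Real.measure_eq_zero_of_forall_inter_Ioo (C := ENNReal.ofReal K * μH[s] E)
    (ENNReal.mul_ne_top ENNReal.ofReal_ne_top hfin) hE fun a b hab ↦ ?_
  rw [mul_right_comm, ← ENNReal.ofReal_mul' (sub_nonneg.2 hab.le)]
  exact h a b hab

/-- If `E ⊆ ℝ` is Lebesgue-null, `s ∈ [0,1]`, `K > 0` and for every open interval `(a,b)` we
have `H^s(E ∩ (a,b)) ≤ K (b-a) H^s(E)`, then `H^s(E)` is `0` or `∞`. -/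
theorem stmt0 (E : Set ℝ) (s K : ℝ) (hs : s ∈ Set.Icc (0 : ℝ) 1) (hK : 0 < K)
    (hE : volume E = 0)
    (h : ∀ a b : ℝ, a < b →
      μH[s] (E ∩ Set.Ioo a b) ≤ ENNReal.ofReal (K * (b - a)) * μH[s] E) :
    μH[s] E = 0 ∨ μH[s] E = ⊤ :=
  stmt0_general E s K hE h
end

section
/- (Jarník's 0-∞ law) Let v > 1 and let R_v = {α ∈ ℝ : there exists K > 0 with |α − p/q| < K·q^{−v−1} for infinitely many rationals p/q}. Then for every s ∈ [0,1], the s-dimensional Hausdorff measure H^s(R_v) is either 0 or ∞; in particular R_v is not an s-set. -/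
/-!
Multiplication by a nonzero rational `c = a/b` maps `R_v` onto itself: an approximation
`|α - p/q| < K q^{-v-1}` becomes `|cα - ap/(bq)| < |a| K b^v (bq)^{-v-1}`. Taking `c = 2`, the
scaling law for Hausdorff measures gives `H^s(R_v) = 2^s H^s(R_v)`, which forces `H^s(R_v)` to be
`0` or `∞` when `s > 0`. For `s = 0` the measure counts points, and `R_v` is infinite since it
contains every Liouville number.
-/

open MeasureTheory

/-- `R_v`: reals `α` such that for some `K > 0`, `|α - p/q| < K q^{-v-1}` for infinitely many
rationals `p/q`. -/
def Rv (v : ℝ) : Set ℝ :=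
  {α | ∃ K > (0 : ℝ), {r : ℚ | ∃ (p : ℤ) (q : ℕ), 0 < q ∧ r = (p : ℚ) / q ∧
    |α - (r : ℝ)| < K * (q : ℝ) ^ (-v - 1)}.Infinite}

open Filter Topology
open scoped ENNReal NNReal Pointwise

theorem MeasureTheory.Measure.hausdorffMeasure_zero_eq_top_of_infinite {X : Type*}
    [EMetricSpace X] [MeasurableSpace X] [BorelSpace X] {s : Set X} (hs : s.Infinite) :
    μH[0] s = ∞ := by
  let f := hs.natEmbedding
  have hrange : ⋃ n, {(f n : X)} ⊆ s := Set.iUnion_subset fun n => by simp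
  refine top_unique (le_trans ?_ (measure_mono hrange))
  rw [measure_iUnion (fun m n hmn => by simpa [Subtype.val_inj] using hmn)
    fun _ => measurableSet_singleton _]
  simp

theorem MeasureTheory.Measure.hausdorffMeasure_eq_zero_or_top_of_smul_eq {𝕜 E : Type*}
    [NormedAddCommGroup E] [NormedDivisionRing 𝕜] [Module 𝕜 E] [NormSMulClass 𝕜 E]
    [MeasurableSpace E] [BorelSpace E] {d : ℝ} (hd : 0 < d) {r : 𝕜} (hr0 : r ≠ 0)
    (hr1 : ‖r‖ ≠ 1) {s : Set E} (hs : r • s = s) : μH[d] s = 0 ∨ μH[d] s = ∞ := by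
  by_contra! h
  have hscale := Measure.hausdorffMeasure_smul₀ hd.le hr0 s
  rw [hs, ENNReal.smul_def, smul_eq_mul] at hscale
  have hpow : ((‖r‖₊ ^ d : ℝ≥0) : ℝ≥0∞) = 1 :=
    ((ENNReal.mul_left_inj h.1 h.2).1 (by rw [one_mul, ← hscale])).symm
  have hnorm : ‖r‖₊ = 1 :=
    NNReal.rpow_left_injective hd.ne' (by simpa using hpow)
  exact hr1 (by simpa using congrArg NNReal.toReal hnorm)

theorem Irrational.infinite_of_mem_closure_image_cast {x : ℝ} (hx : Irrational x) {S : Set ℚ}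
    (h : x ∈ closure (((↑) : ℚ → ℝ) '' S)) : S.Infinite := fun hS => by
  obtain ⟨r, -, rfl⟩ := (hS.image _).isClosed.closure_subset h
  exact hx ⟨r, rfl⟩

theorem Liouville.mem_Rv {x : ℝ} (hx : Liouville x) (v : ℝ) : x ∈ Rv v := by
  -- `e ≥ v + 1` gives the quality of approximation required by `Rv v`, and `e > 0` makes the
  -- approximations converge to `x`, hence infinitely many distinct ones.
  set e := max (v + 1) 1
  have he : 0 < e := lt_max_of_lt_right one_pos
  have hfreq := (hx.liouvilleWith (e + 1)).frequently_lt_rpow_neg (lt_add_one e)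
  have hsmall : Tendsto (fun n : ℕ => (n : ℝ) ^ (-e)) atTop (𝓝 0) :=
    (tendsto_rpow_neg_atTop he).comp tendsto_natCast_atTop_atTop
  refine ⟨1, one_pos, hx.irrational.infinite_of_mem_closure_image_cast ?_⟩
  refine Metric.mem_closure_iff.2 fun ε hε => ?_
  obtain ⟨n, ⟨m, -, hlt⟩, hn, hnε⟩ := (hfreq.and_eventually
    ((eventually_gt_atTop 0).and (hsmall.eventually (gt_mem_nhds hε)))).exists
  have hcast : (((m / n : ℚ)) : ℝ) = m / n := by push_cast; rfl
  refine ⟨_, ⟨m / n, ⟨m, n, hn, rfl, ?_⟩, rfl⟩, ?_⟩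
  · rw [hcast, one_mul]
    refine hlt.trans_le (Real.rpow_le_rpow_of_exponent_le (by exact_mod_cast hn) ?_)
    linarith [le_max_left (v + 1) 1]
  · rw [Real.dist_eq, hcast]
    exact hlt.trans hnε

theorem ratCast_mul_mem_Rv {v x : ℝ} (hx : x ∈ Rv v) {c : ℚ} (hc : c ≠ 0) :
    (c : ℝ) * x ∈ Rv v := by
  obtain ⟨K, hK, hS⟩ := hx
  have hb : (0 : ℝ) < c.den := by exact_mod_cast c.den_pos
  refine ⟨|(c.num : ℝ)| * K * (c.den : ℝ) ^ v, by positivity,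
    (hS.image (mul_right_injective₀ hc).injOn).mono ?_⟩
  rintro _ ⟨r, ⟨p, q, hq, hr, hlt⟩, rfl⟩
  have hq' : (0 : ℝ) < q := by exact_mod_cast hq
  refine ⟨c.num * p, c.den * q, Nat.mul_pos c.den_pos hq, ?_, ?_⟩
  · rw [hr]
    push_cast
    conv_lhs => rw [← Rat.num_div_den c]
    rw [div_mul_div_comm]
  · have hden : (c.den : ℝ) ^ v * (c.den : ℝ) ^ (-v - 1) = (c.den : ℝ)⁻¹ := by
      rw [← Real.rpow_add hb, show v + (-v - 1) = -1 by ring, Real.rpow_neg_one]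
    calc |(c : ℝ) * x - ((c * r : ℚ) : ℝ)| = |(c : ℝ)| * |x - r| := by
          rw [Rat.cast_mul, ← mul_sub, abs_mul]
      _ < |(c : ℝ)| * (K * (q : ℝ) ^ (-v - 1)) :=
          mul_lt_mul_of_pos_left hlt (abs_pos.2 (by exact_mod_cast hc))
      _ = |(c.num : ℝ)| * K * (c.den : ℝ) ^ v * ((c.den * q : ℕ) : ℝ) ^ (-v - 1) := by
          rw [Nat.cast_mul, Real.mul_rpow hb.le hq'.le, Rat.cast_def, abs_div, Nat.abs_cast]
          linear_combination (-|(c.num : ℝ)| * K * (q : ℝ) ^ (-v - 1)) * hden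

theorem ratCast_smul_Rv (v : ℝ) {c : ℚ} (hc : c ≠ 0) : (c : ℝ) • Rv v = Rv v := by
  ext x
  constructor
  · rintro ⟨y, hy, rfl⟩
    exact ratCast_mul_mem_Rv hy hc
  · intro hx
    refine ⟨_, ratCast_mul_mem_Rv hx (inv_ne_zero hc), ?_⟩
    simp [hc]

theorem infinite_Rv (v : ℝ) : (Rv v).Infinite :=
  Set.infinite_of_injective_forall_mem (f := fun n : ℕ => liouvilleNumber 2 + n)
    ((add_right_injective _).comp Nat.cast_injective) fun n =>
      (forall_liouvilleWith_iff.1 fun p =>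
        ((liouville_liouvilleNumber le_rfl).liouvilleWith p).add_nat n).mem_Rv v

theorem hausdorffMeasure_Rv_eq_zero_or_top (v : ℝ) {d : ℝ} (hd : 0 ≤ d) :
    μH[d] (Rv v) = 0 ∨ μH[d] (Rv v) = ∞ := by
  rcases hd.eq_or_lt with rfl | hd
  · exact Or.inr (Measure.hausdorffMeasure_zero_eq_top_of_infinite (infinite_Rv v))
  · exact Measure.hausdorffMeasure_eq_zero_or_top_of_smul_eq hd (by norm_num) (by norm_num)
      (ratCast_smul_Rv v (two_ne_zero : (2 : ℚ) ≠ 0))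

theorem stmt9_general (v : ℝ) :
    (∀ s ∈ Set.Icc (0 : ℝ) 1, μH[s] (Rv v) = 0 ∨ μH[s] (Rv v) = ⊤) ∧
    ¬ (0 < μH[(dimH (Rv v)).toReal] (Rv v) ∧ μH[(dimH (Rv v)).toReal] (Rv v) < ⊤) := by
  refine ⟨fun s hs => hausdorffMeasure_Rv_eq_zero_or_top v hs.1, fun ⟨hpos, hlt⟩ => ?_⟩
  rcases hausdorffMeasure_Rv_eq_zero_or_top v ENNReal.toReal_nonneg with h | h
  · exact hpos.ne' h
  · exact hlt.ne h

/-- Jarník's 0-∞ law: for `v > 1` and any `s ∈ [0,1]`, `H^s(R_v)` is `0` or `∞`; in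
particular `R_v` is not an `s`-set (its Hausdorff measure at the critical exponent
`dim_H R_v` is not positive and finite). -/
theorem stmt9 (v : ℝ) (hv : 1 < v) :
    (∀ s ∈ Set.Icc (0 : ℝ) 1, μH[s] (Rv v) = 0 ∨ μH[s] (Rv v) = ⊤) ∧
    ¬ (0 < μH[(dimH (Rv v)).toReal] (Rv v) ∧ μH[(dimH (Rv v)).toReal] (Rv v) < ⊤) :=
  stmt9_general v
end

section
/- (Jarník's theorem on badly approximable numbers) The set 𝔅 of badly approximable real numbers, 𝔅 = {α ∈ ℝ : there exists K > 0 such that |α − p/q| ≥ K/q² for all rationals p/q}, has Hausdorff dimension 1. -/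
/-!
Fix an integer base `R`. Two distinct rationals with `q ^ 2, q' ^ 2 < R ^ n` are more than
`R ^ (-n)` apart, so at most two of them lie near an interval of length `R ^ (-n)`, and each of
them comes within `R ^ (-(n+1))` of at most three of its `R` subintervals of length
`R ^ (-(n+1))`. Keeping `R - 6` subintervals at every generation gives a Cantor set of points
`x` with `|x - p / q| ≥ R ^ (-2) / q ^ 2`. The image of the uniform Bernoulli measure on
`ℕ → Fin (R - 6)` gives a set of diameter `δ` mass `O(δ ^ d)` whenever `R ^ d ≤ R - 6`, so the
mass distribution principle bounds the dimension of this Cantor set below by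
`log (R - 6) / log R`, which tends to `1`.
-/

open Set MeasureTheory Filter
open scoped ENNReal NNReal Topology

/-- The set `𝔅` of badly approximable real numbers: those `α` for which there is `K > 0`
with `|α - p/q| ≥ K/q²` for all rationals `p/q`. -/
def badApprox : Set ℝ :=
  {α | ∃ K > (0 : ℝ), ∀ (p : ℤ) (q : ℕ), 0 < q → K / (q : ℝ) ^ 2 ≤ |α - (p : ℝ) / q|}

theorem encard_le_of_pairwise_le_abs_sub {ι : Type*} {S : Set ι} {f : ι → ℝ} {s c : ℝ}
    {k : ℕ} (hs : 0 < s) (hS : ∀ i ∈ S, f i ∈ Ico c (c + (k + 1) * s))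
    (hsep : S.Pairwise fun i j => s ≤ |f i - f j|) : S.encard ≤ k + 1 := by
  set g : ι → ℕ := fun i => ⌊(f i - c) / s⌋₊
  have hg : ∀ i ∈ S, (g i : ℝ) * s ≤ f i - c ∧ f i - c < (g i + 1) * s := fun i hi => by
    have h₀ : 0 ≤ (f i - c) / s := div_nonneg (sub_nonneg.2 (hS i hi).1) hs.le
    rw [← le_div_iff₀ hs, ← div_lt_iff₀ hs]
    exact ⟨Nat.floor_le h₀, Nat.lt_floor_add_one _⟩
  have hmaps : MapsTo g S (Finset.range (k + 1) : Set ℕ) := by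
    intro i hi
    have : (g i : ℝ) < k + 1 :=
      lt_of_mul_lt_mul_right (by linarith [(hg i hi).1, (hS i hi).2]) hs.le
    simp only [Finset.coe_range, mem_Iio]
    exact_mod_cast this
  have hinj : InjOn g S := by
    intro i hi j hj hij
    by_contra hne
    have hi' := hg i hi
    have hj' := hg j hj
    rw [hij] at hi'
    cases le_abs'.1 (hsep hi hj hne) <;> nlinarith
  calc S.encard ≤ (Finset.range (k + 1) : Set ℕ).encard := encard_le_encard_of_injOn hmaps hinj
    _ = k + 1 := by rw [encard_coe_eq_coe_finsetCard, Finset.card_range]; push_cast; rfl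

theorem inv_pow_le_mul_rpow {R m d x : ℝ} (hR : 1 < R) (hd : 0 ≤ d) (hm : R ^ d ≤ m) {n : ℕ}
    (hx : (R ^ (n + 1))⁻¹ ≤ x) : (m ^ n)⁻¹ ≤ m * x ^ d := by
  have hR₀ : 0 < R := by linarith
  have hm₀ : 0 < m := (Real.rpow_pos_of_pos hR₀ d).trans_le hm
  have hpow : (R ^ (n + 1)) ^ d ≤ m ^ (n + 1) := by
    rw [← Real.rpow_natCast, ← Real.rpow_mul hR₀.le, mul_comm, Real.rpow_mul hR₀.le,
      Real.rpow_natCast]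
    gcongr
  calc (m ^ n)⁻¹ = m * (m ^ (n + 1))⁻¹ := by field_simp; ring
    _ ≤ m * ((R ^ (n + 1)) ^ d)⁻¹ := by gcongr
    _ = m * ((R ^ (n + 1))⁻¹) ^ d := by rw [Real.inv_rpow (by positivity)]
    _ ≤ m * x ^ d := by gcongr

section UniformBernoulli

variable (α : Type*) [Fintype α] [Nonempty α] [MeasurableSpace α]

noncomputable def uniformBernoulli : Measure (ℕ → α) :=
  Measure.infinitePi fun _ => (PMF.uniformOfFintype α).toMeasure

instance : IsProbabilityMeasure (uniformBernoulli α) := by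
  unfold uniformBernoulli; infer_instance

variable {α} [MeasurableSingletonClass α]

theorem uniformBernoulli_cylinder (u : ℕ → α) (n : ℕ) :
    uniformBernoulli α {w | ∀ i < n, w i = u i} = (Fintype.card α : ℝ≥0∞)⁻¹ ^ n := by
  have : {w : ℕ → α | ∀ i < n, w i = u i} = (Finset.range n : Set ℕ).pi fun i => {u i} := by
    ext w; simp
  rw [uniformBernoulli, this, Measure.infinitePi_pi _ fun i _ => measurableSet_singleton _]
  simp [PMF.toMeasure_apply_singleton _ _ (measurableSet_singleton _)]

end UniformBernoulli

/-- Nested intervals `[left w n, left w n + 1 / R ^ n]` indexed by the first `n` letters of `w`,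
with the left ends of distinct children of one interval at least `1 / R ^ (n + 1)` apart. -/
structure CantorScheme (α : Type*) (R : ℝ) where
  left : (ℕ → α) → ℕ → ℝ
  left_le_left_succ : ∀ w n, left w n ≤ left w (n + 1)
  right_succ_le_right : ∀ w n, left w (n + 1) + (R ^ (n + 1))⁻¹ ≤ left w n + (R ^ n)⁻¹
  left_congr : ∀ w w' n, (∀ i < n, w i = w' i) → left w n = left w' n
  le_abs_left_sub_left_succ : ∀ w w' n, (∀ i < n, w i = w' i) → w n ≠ w' n →
    (R ^ (n + 1))⁻¹ ≤ |left w (n + 1) - left w' (n + 1)|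

namespace CantorScheme

variable {α : Type*} {R : ℝ} (C : CantorScheme α R)

theorem left_mono (w : ℕ → α) : Monotone (C.left w) :=
  monotone_nat_of_le_succ (C.left_le_left_succ w)

theorem right_anti (w : ℕ → α) : Antitone fun n => C.left w n + (R ^ n)⁻¹ :=
  antitone_nat_of_succ_le (C.right_succ_le_right w)

theorem le_abs_left_sub_left {w w' : ℕ → α} {n : ℕ} (h : ¬ ∀ i < n, w i = w' i) :
    (R ^ n)⁻¹ ≤ |C.left w n - C.left w' n| := by
  induction n with
  | zero => simp at h
  | succ n ih =>
    by_cases hpre : ∀ i < n, w i = w' i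
    · refine C.le_abs_left_sub_left_succ w w' n hpre fun hn => h fun i hi => ?_
      obtain hi | rfl := Nat.lt_succ_iff_lt_or_eq.1 hi
      exacts [hpre i hi, hn]
    · -- nested intervals: a gap between parents persists between their children
      have := C.right_succ_le_right w n
      have := C.right_succ_le_right w' n
      have := C.left_le_left_succ w n
      have := C.left_le_left_succ w' n
      rcases le_abs'.1 (ih hpre) with h' | h' <;> rw [le_abs'] <;> [left; right] <;> linarith

theorem left_eq_left_iff (hR : 0 < R) {w w' : ℕ → α} {n : ℕ} :
    C.left w n = C.left w' n ↔ ∀ i < n, w i = w' i := by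
  refine ⟨fun h => ?_, C.left_congr w w' n⟩
  by_contra hne
  have := C.le_abs_left_sub_left hne
  rw [h, sub_self, abs_zero] at this
  exact this.not_gt (by positivity)

noncomputable def point (w : ℕ → α) : ℝ := ⨆ n, C.left w n

theorem point_mem (hR : 0 < R) (w : ℕ → α) (n : ℕ) :
    C.point w ∈ Icc (C.left w n) (C.left w n + (R ^ n)⁻¹) := by
  have hle : ∀ k, C.left w k ≤ C.left w n + (R ^ n)⁻¹ := fun k => by
    rcases le_total k n with hk | hk
    · linarith [C.left_mono w hk, inv_pos.2 (pow_pos hR n)]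
    · linarith [C.right_anti w hk, inv_pos.2 (pow_pos hR k)]
  exact ⟨le_ciSup ⟨_, forall_mem_range.2 hle⟩ n, ciSup_le hle⟩

section Measure

variable [Fintype α] [Nonempty α] [MeasurableSpace α] [MeasurableSingletonClass α]

theorem measurable_left (n : ℕ) : Measurable fun w => C.left w n := by
  let extend : (Fin n → α) → ℕ → α := fun v i =>
    if h : i < n then v ⟨i, h⟩ else Classical.arbitrary α
  have hfactor : (fun w => C.left w n) = (fun v => C.left (extend v) n) ∘ fun w i => w i :=
    funext fun w => C.left_congr _ _ n fun i hi => by simp [extend, hi]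
  rw [hfactor]
  exact (measurable_of_countable _).comp (measurable_pi_lambda _ fun i => measurable_pi_apply _)

theorem measurable_point (hR : 0 < R) : Measurable C.point :=
  measurable_of_tendsto_metrizable C.measurable_left <| tendsto_pi_nhds.2 fun w =>
    tendsto_atTop_ciSup (C.left_mono w) ⟨_, forall_mem_range.2 fun n => (C.point_mem hR w n).1⟩

theorem uniformBernoulli_left_mem_Icc_le (hR : 0 < R) (n : ℕ) (c : ℝ) :
    uniformBernoulli α {w | C.left w n ∈ Icc c (c + 2 * (R ^ n)⁻¹)} ≤
      3 * (Fintype.card α : ℝ≥0∞)⁻¹ ^ n := by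
  set T := {w | C.left w n ∈ Icc c (c + 2 * (R ^ n)⁻¹)}
  have hℓ : 0 < (R ^ n)⁻¹ := by positivity
  -- distinct values of `C.left · n` on `T` are `(R ^ n)⁻¹`-separated points of a short window
  have hcard : (T.image fun w => C.left w n).encard ≤ 3 := by
    refine encard_le_of_pairwise_le_abs_sub (f := id) (c := c) (k := 2) hℓ ?_ ?_
    · rintro _ ⟨w, hw, rfl⟩
      exact ⟨hw.1, by simp only [id]; push_cast; linarith [hw.2]⟩
    · rintro _ ⟨w, -, rfl⟩ _ ⟨w', -, rfl⟩ hne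
      exact C.le_abs_left_sub_left (mt (C.left_congr w w' n) hne)
  have hcover : T ⊆ ⋃ x ∈ T.image fun w => C.left w n, {w | C.left w n = x} :=
    fun w hw => mem_biUnion (mem_image_of_mem _ hw) rfl
  calc uniformBernoulli α T
      ≤ ∑' x : (T.image fun w => C.left w n), uniformBernoulli α {w | C.left w n = x} :=
        (measure_mono hcover).trans
          (measure_biUnion_le _ (finite_of_encard_le_coe hcard).countable _)
    _ ≤ ∑' _ : (T.image fun w => C.left w n), (Fintype.card α : ℝ≥0∞)⁻¹ ^ n := by
        refine ENNReal.tsum_le_tsum ?_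
        rintro ⟨_, w₀, -, rfl⟩
        rw [← uniformBernoulli_cylinder w₀ n]
        exact measure_mono fun w hw => (C.left_eq_left_iff hR).1 hw
    _ ≤ 3 * (Fintype.card α : ℝ≥0∞)⁻¹ ^ n := by
        rw [ENNReal.tsum_set_const]
        gcongr
        exact_mod_cast hcard

theorem map_point_Icc_le (hR : 0 < R) (n : ℕ) {lo hi : ℝ} (hlen : hi - lo ≤ (R ^ n)⁻¹) :
    (uniformBernoulli α).map C.point (Icc lo hi) ≤
      3 * (Fintype.card α : ℝ≥0∞)⁻¹ ^ n := by
  rw [Measure.map_apply (C.measurable_point hR) measurableSet_Icc]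
  refine (measure_mono fun w hw => ?_).trans
    (C.uniformBernoulli_left_mem_Icc_le hR n (lo - (R ^ n)⁻¹))
  have := C.point_mem hR w n
  simp only [mem_preimage, mem_Icc] at hw this
  constructor <;> linarith

theorem map_point_singleton (hR : 0 < R) (hα : 1 < Fintype.card α) (x : ℝ) :
    (uniformBernoulli α).map C.point {x} = 0 := by
  have hlim : Tendsto (fun n => 3 * (Fintype.card α : ℝ≥0∞)⁻¹ ^ n) atTop (𝓝 0) := by
    simpa using ENNReal.Tendsto.const_mul
      (ENNReal.tendsto_pow_atTop_nhds_zero_of_lt_one (ENNReal.inv_lt_one.2 (by exact_mod_cast hα)))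
      (Or.inr ENNReal.ofNat_ne_top)
  refine le_antisymm (ge_of_tendsto' hlim fun n => ?_) zero_le
  exact (measure_mono (Icc_self x).ge).trans
    (C.map_point_Icc_le hR n (by rw [sub_self]; positivity))

theorem map_point_le_of_subset_Icc (hR : 1 < R) {d : ℝ} (hd : 0 ≤ d)
    (hm : R ^ d ≤ Fintype.card α) {S : Set ℝ} {u D : ℝ} (hD₀ : 0 < D) (hD : D ≤ 2⁻¹)
    (hS : S ⊆ Icc (u - D) (u + D)) :
    (uniformBernoulli α).map C.point S ≤
      ENNReal.ofReal (3 * Fintype.card α * 2 ^ d) * ENNReal.ofReal D ^ d := by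
  have h2D : 1 ≤ (2 * D)⁻¹ := (one_le_inv₀ (by positivity)).2 (by linarith)
  obtain ⟨n, hn, hn'⟩ := exists_nat_pow_near h2D hR
  calc (uniformBernoulli α).map C.point S
      ≤ 3 * (Fintype.card α : ℝ≥0∞)⁻¹ ^ n :=
        (measure_mono hS).trans (C.map_point_Icc_le (by linarith) n (by
          rw [le_inv_comm₀ (by positivity) (by positivity)] at hn
          linarith))
    _ = ENNReal.ofReal (3 * ((Fintype.card α : ℝ) ^ n)⁻¹) := by
        rw [ENNReal.ofReal_mul (by norm_num), ENNReal.ofReal_inv_of_pos (by positivity),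
          ENNReal.ofReal_pow (by positivity)]
        simp [ENNReal.inv_pow]
    _ ≤ ENNReal.ofReal (3 * (Fintype.card α * (2 * D) ^ d)) := by
        gcongr
        exact inv_pow_le_mul_rpow hR hd hm
          ((inv_le_comm₀ (by positivity) (by positivity)).1 hn'.le)
    _ = ENNReal.ofReal (3 * Fintype.card α * 2 ^ d) * ENNReal.ofReal D ^ d := by
        rw [ENNReal.ofReal_rpow_of_nonneg hD₀.le hd, ← ENNReal.ofReal_mul (by positivity),
          Real.mul_rpow (by norm_num) hD₀.le]
        ring_nf

theorem map_point_le_mul_ediam_rpow (hR : 1 < R) {d : ℝ} (hd : 0 < d)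
    (hm : R ^ d ≤ Fintype.card α) {S : Set ℝ} (hS : Metric.ediam S ≤ 2⁻¹) :
    (uniformBernoulli α).map C.point S ≤
      ENNReal.ofReal (3 * Fintype.card α * 2 ^ d) * Metric.ediam S ^ d := by
  rcases eq_or_ne (Metric.ediam S) 0 with h0 | h0
  · obtain rfl | ⟨x, rfl⟩ := (Metric.ediam_eq_zero_iff.1 h0).eq_empty_or_singleton
    · simp
    rw [C.map_point_singleton (by linarith)
      (by exact_mod_cast (Real.one_lt_rpow hR hd).trans_le hm)]
    exact zero_le
  obtain ⟨u, hu⟩ : S.Nonempty := nonempty_iff_ne_empty.2 fun h => h0 (by simp [h])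
  have hfin : Metric.ediam S ≠ ⊤ := ne_top_of_le_ne_top (by simp) hS
  have hsub : S ⊆ Icc (u - Metric.diam S) (u + Metric.diam S) := fun x hx => by
    have := Metric.dist_le_diam_of_mem' hfin hx hu
    rw [Real.dist_eq] at this
    constructor <;> linarith [abs_le.1 this]
  rw [← ENNReal.ofReal_toReal hfin]
  exact C.map_point_le_of_subset_Icc hR hd.le hm (ENNReal.toReal_pos h0 hfin)
    ((ENNReal.toReal_mono (by simp) hS).trans_eq (by simp)) hsub

end Measure

theorem le_dimH_range_point [Fintype α] (hR : 1 < R) {d : ℝ≥0}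
    (hm : R ^ (d : ℝ) ≤ Fintype.card α) :
    (d : ℝ≥0∞) ≤ dimH (range C.point) := by
  rcases eq_or_ne d 0 with rfl | hd
  · simp
  have hd₀ : (0 : ℝ) < d := by positivity
  have : Nonempty α := Fintype.card_pos_iff.1 <| by
    exact_mod_cast (Real.rpow_pos_of_pos (by linarith) _).trans_le hm
  let _ : MeasurableSpace α := ⊤
  set ν := (uniformBernoulli α).map C.point
  set c := ENNReal.ofReal (3 * Fintype.card α * 2 ^ (d : ℝ))
  have hc : c ≠ 0 := (ENNReal.ofReal_pos.2 (by positivity)).ne'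
  have hν : c⁻¹ • ν ≤ μH[d] :=
    Measure.le_hausdorffMeasure _ _ 2⁻¹ (by simp) fun S hS => by
      rw [Measure.smul_apply, smul_eq_mul, ENNReal.inv_mul_le_iff hc ENNReal.ofReal_ne_top]
      exact C.map_point_le_mul_ediam_rpow hR hd₀ hm hS
  have hrange : 1 ≤ ν (range C.point) := by
    calc 1 = uniformBernoulli α (C.point ⁻¹' range C.point) := by
          rw [preimage_range, measure_univ]
      _ ≤ ν (range C.point) :=
          Measure.le_map_apply (C.measurable_point (by linarith)).aemeasurable _
  refine le_dimH_of_hausdorffMeasure_ne_zero (ne_of_gt ?_)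
  calc 0 < c⁻¹ := ENNReal.inv_pos.2 ENNReal.ofReal_ne_top
    _ ≤ c⁻¹ * ν (range C.point) := le_mul_of_one_le_right zero_le hrange
    _ ≤ μH[d] (range C.point) := by simpa using Measure.le_iff'.1 hν (range C.point)

end CantorScheme

theorem exists_embedding_of_encard_le {N m : ℕ} {P : Fin N → Prop}
    (h : {k | ¬ P k}.encard ≤ m) : ∃ e : Fin (N - m) ↪ Fin N, ∀ i, P (e i) := by
  classical
  have hsum := encard_add_encard_compl {k | P k}
  rw [encard_univ, ENat.card_eq_coe_fintype_card, Fintype.card_fin, compl_ofPred,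
    (toFinite {k | P k}).encard_eq_coe_toFinset_card,
    (toFinite {k | ¬ P k}).encard_eq_coe_toFinset_card] at hsum
  rw [(toFinite {k | ¬ P k}).encard_eq_coe_toFinset_card] at h
  norm_cast at hsum h
  have hcard : N - m ≤ (toFinite {k | P k}).toFinset.card := by omega
  exact ⟨((toFinite {k | P k}).toFinset.orderEmbOfCardLe hcard).toEmbedding, fun i => by
    simpa using (toFinite {k | P k}).toFinset.orderEmbOfCardLe_mem hcard i⟩

def ratsDenomSqLt (N : ℕ) : Set ℝ :=
  {x | ∃ (p : ℤ) (q : ℕ), 0 < q ∧ q ^ 2 < N ∧ (p : ℝ) / q = x}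

theorem inv_mul_le_abs_div_sub_div {p p' : ℤ} {q q' : ℕ} (hq : 0 < q) (hq' : 0 < q')
    (hne : (p : ℝ) / q ≠ p' / q') : ((q : ℝ) * q')⁻¹ ≤ |(p : ℝ) / q - p' / q'| := by
  have hq₀ : (0 : ℝ) < q := by exact_mod_cast hq
  have hq₀' : (0 : ℝ) < q' := by exact_mod_cast hq'
  have hnum : p * q' - q * p' ≠ 0 := fun h => hne <| by
    rw [div_eq_div_iff hq₀.ne' hq₀'.ne']
    rw [mul_comm (q : ℤ)] at h
    exact_mod_cast sub_eq_zero.1 h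
  have h1 : (1 : ℝ) ≤ |(p : ℝ) * q' - q * p'| := by exact_mod_cast Int.one_le_abs hnum
  rw [div_sub_div _ _ hq₀.ne' hq₀'.ne', abs_div, abs_of_pos (mul_pos hq₀ hq₀'),
    inv_eq_one_div]
  exact div_le_div_of_nonneg_right h1 (by positivity)

theorem ratsDenomSqLt_pairwise (N : ℕ) :
    (ratsDenomSqLt N).Pairwise fun x y => (N : ℝ)⁻¹ ≤ |x - y| := by
  rintro _ ⟨p, q, hq, hqN, rfl⟩ _ ⟨p', q', hq', hq'N, rfl⟩ hne
  have hqq' : q * q' ≤ N := by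
    have : (q * q') ^ 2 < N ^ 2 := by rw [mul_pow, sq N]; exact Nat.mul_lt_mul'' hqN hq'N
    exact (lt_of_pow_lt_pow_left₀ 2 (Nat.zero_le _) this).le
  exact le_trans (inv_anti₀ (by positivity) (by exact_mod_cast hqq'))
    (inv_mul_le_abs_div_sub_div hq hq' hne)

/-- The `k`-th child `[A + k / R ^ (n + 1), A + (k + 1) / R ^ (n + 1)]` of the generation-`n`
interval `[A, A + 1 / R ^ n]` is safe if its `1 / R ^ (n + 1)`-neighbourhood contains no `p / q`
with `q ^ 2 < R ^ n`. -/
def IsSafeChild (R n : ℕ) (A : ℝ) (k : ℕ) : Prop :=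
  Disjoint (ratsDenomSqLt (R ^ n))
    (Ioo (A + (k - 1) * ((R : ℝ) ^ (n + 1))⁻¹) (A + (k + 2) * ((R : ℝ) ^ (n + 1))⁻¹))

variable {R : ℕ}

theorem encard_ratsDenomSqLt_inter_Icc_le (hR : 3 ≤ R) (n : ℕ) (A : ℝ) :
    (ratsDenomSqLt (R ^ n) ∩ Icc (A - ((R : ℝ) ^ (n + 1))⁻¹)
      (A + (R + 1) * ((R : ℝ) ^ (n + 1))⁻¹)).encard ≤ 2 := by
  have hR' : (3 : ℝ) ≤ R := by exact_mod_cast hR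
  have hℓ : ((R : ℝ) ^ n)⁻¹ = R * ((R : ℝ) ^ (n + 1))⁻¹ := by
    rw [pow_succ]; field_simp
  have hℓ' : 0 < ((R : ℝ) ^ (n + 1))⁻¹ := by positivity
  refine (encard_le_of_pairwise_le_abs_sub (f := id) (c := A - ((R : ℝ) ^ (n + 1))⁻¹)
    (k := 1) (s := ((R : ℝ) ^ n)⁻¹) (by positivity) ?_ ?_).trans_eq (by norm_num)
  · rintro x ⟨-, hx₁, hx₂⟩
    refine ⟨hx₁, ?_⟩
    rw [hℓ, id]
    push_cast
    nlinarith
  · simpa using (ratsDenomSqLt_pairwise (R ^ n)).mono inter_subset_left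

theorem encard_setOf_mem_Ioo_le_three {N : ℕ} {A ℓ : ℝ} (hℓ : 0 < ℓ) (x : ℝ) :
    {k : Fin N | x ∈ Ioo (A + (k - 1) * ℓ) (A + (k + 2) * ℓ)}.encard ≤ 3 := by
  refine (encard_le_of_pairwise_le_abs_sub (f := fun k : Fin N => (k : ℝ))
    (c := (x - A) / ℓ - 2) (k := 2) one_pos ?_ ?_).trans_eq
    (by norm_num : ((2 : ℕ) : ℕ∞) + 1 = 3)
  · rintro k ⟨hk₁, hk₂⟩
    have h₁ : (k : ℝ) - 1 < (x - A) / ℓ := by rw [lt_div_iff₀ hℓ]; linarith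
    have h₂ : (x - A) / ℓ < k + 2 := by rw [div_lt_iff₀ hℓ]; linarith
    constructor <;> push_cast <;> linarith
  · intro k _ k' _ hne
    have : (k : ℤ) - k' ≠ 0 := sub_ne_zero.2 (by exact_mod_cast Fin.val_injective.ne hne)
    exact_mod_cast Int.one_le_abs this

theorem encard_not_isSafeChild_le (hR : 3 ≤ R) (n : ℕ) (A : ℝ) :
    {k : Fin R | ¬ IsSafeChild R n A k}.encard ≤ 6 := by
  set ℓ := ((R : ℝ) ^ (n + 1))⁻¹
  set B := ratsDenomSqLt (R ^ n) ∩ Icc (A - ℓ) (A + (R + 1) * ℓ)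
  have hB : B.encard ≤ 2 := encard_ratsDenomSqLt_inter_Icc_le hR n A
  have hBfin : B.Finite := finite_of_encard_le_coe hB
  have hsub : {k : Fin R | ¬ IsSafeChild R n A k} ⊆
      ⋃ x ∈ hBfin.toFinset,
        {k : Fin R | x ∈ Ioo (A + (k - 1) * ℓ) (A + (k + 2) * ℓ)} := by
    intro k hk
    obtain ⟨x, hxB, hx⟩ := not_disjoint_iff.1 hk
    have hkR : (k : ℝ) + 1 ≤ R := by exact_mod_cast k.isLt
    have hℓ : 0 < ℓ := by positivity
    refine mem_biUnion (x := x) ?_ hx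
    rw [Finset.mem_coe, Finite.mem_toFinset]
    exact ⟨hxB, by nlinarith [hx.1], by nlinarith [hx.2]⟩
  calc {k : Fin R | ¬ IsSafeChild R n A k}.encard
      ≤ ∑ x ∈ hBfin.toFinset,
          {k : Fin R | x ∈ Ioo (A + (k - 1) * ℓ) (A + (k + 2) * ℓ)}.encard :=
        (encard_le_encard hsub).trans (Finset.set_encard_biUnion_le _ _)
    _ ≤ ∑ _x ∈ hBfin.toFinset, 3 :=
        Finset.sum_le_sum fun x _ => encard_setOf_mem_Ioo_le_three (by positivity) x
    _ ≤ 6 := by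
        rw [Finset.sum_const, nsmul_eq_mul, ← hBfin.encard_eq_coe_toFinset_card]
        calc B.encard * 3 ≤ 2 * 3 := by gcongr
          _ = 6 := by norm_num

noncomputable def safeChildren (hR : 3 ≤ R) (n : ℕ) (A : ℝ) : Fin (R - 6) ↪ Fin R :=
  (exists_embedding_of_encard_le (encard_not_isSafeChild_le hR n A)).choose

theorem isSafeChild_safeChildren (hR : 3 ≤ R) (n : ℕ) (A : ℝ) (i : Fin (R - 6)) :
    IsSafeChild R n A (safeChildren hR n A i) :=
  (exists_embedding_of_encard_le (encard_not_isSafeChild_le hR n A)).choose_spec i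

noncomputable def jarnikLeft (hR : 3 ≤ R) (w : ℕ → Fin (R - 6)) : ℕ → ℝ
  | 0 => 0
  | n + 1 => jarnikLeft hR w n +
      (safeChildren hR n (jarnikLeft hR w n) (w n) : ℕ) * ((R : ℝ) ^ (n + 1))⁻¹

theorem jarnikLeft_congr (hR : 3 ≤ R) {w w' : ℕ → Fin (R - 6)} {n : ℕ}
    (h : ∀ i < n, w i = w' i) : jarnikLeft hR w n = jarnikLeft hR w' n := by
  induction n with
  | zero => rfl
  | succ n ih =>
    rw [jarnikLeft, jarnikLeft, ih fun i hi => h i (by omega), h n (by omega)]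

noncomputable def jarnikScheme (hR : 3 ≤ R) : CantorScheme (Fin (R - 6)) R where
  left := jarnikLeft hR
  left_le_left_succ w n := le_add_of_nonneg_right (by positivity)
  right_succ_le_right w n := by
    have hk : ((safeChildren hR n (jarnikLeft hR w n) (w n) : ℕ) : ℝ) + 1 ≤ R := by
      exact_mod_cast (safeChildren hR n (jarnikLeft hR w n) (w n)).isLt
    have hR₀ : (0 : ℝ) < R := by positivity
    have hℓ : ((R : ℝ) ^ n)⁻¹ = R * ((R : ℝ) ^ (n + 1))⁻¹ := by
      rw [pow_succ]; field_simp
    rw [jarnikLeft, hℓ]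
    nlinarith [inv_pos.2 (pow_pos hR₀ (n + 1))]
  left_congr w w' n := jarnikLeft_congr hR
  le_abs_left_sub_left_succ w w' n h hne := by
    rw [jarnikLeft, jarnikLeft, jarnikLeft_congr hR h, add_sub_add_left_eq_sub, ← sub_mul,
      abs_mul, abs_of_pos (by positivity : (0 : ℝ) < ((R : ℝ) ^ (n + 1))⁻¹)]
    refine le_mul_of_one_le_left (by positivity) ?_
    have : (safeChildren hR n (jarnikLeft hR w' n) (w n) : ℤ) -
        safeChildren hR n (jarnikLeft hR w' n) (w' n) ≠ 0 :=
      sub_ne_zero.2 <| by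
        exact_mod_cast Fin.val_injective.ne ((safeChildren _ _ _).injective.ne hne)
    exact_mod_cast Int.one_le_abs this

theorem jarnikScheme_point_mem_badApprox (hR : 3 ≤ R) (w : ℕ → Fin (R - 6)) :
    (jarnikScheme hR).point w ∈ badApprox := by
  refine ⟨((R : ℝ) ^ 2)⁻¹, by positivity, fun p q hq => ?_⟩
  have hR₀ : (0 : ℝ) < R := by positivity
  -- the generation `j + 1` with `R ^ j ≤ q ^ 2 < R ^ (j + 1)` is the one that keeps `p / q` away
  set j := Nat.log R (q ^ 2)
  have hj : R ^ j ≤ q ^ 2 := Nat.pow_log_le_self R (by positivity)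
  have hj' : q ^ 2 < R ^ (j + 1) := Nat.lt_pow_succ_log_self (by omega) _
  set A := jarnikLeft hR w (j + 1)
  set k : ℕ := (safeChildren hR (j + 1) A (w (j + 1)) : ℕ)
  set ℓ := ((R : ℝ) ^ (j + 2))⁻¹
  have hout : (p : ℝ) / q ∉ Ioo (A + (k - 1) * ℓ) (A + (k + 2) * ℓ) :=
    disjoint_left.1 (isSafeChild_safeChildren hR (j + 1) A (w (j + 1))) ⟨p, q, hq, hj', rfl⟩
  obtain ⟨hx₁, hx₂⟩ := (jarnikScheme hR).point_mem hR₀ w (j + 2)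
  have hleft : (jarnikScheme hR).left w (j + 2) = A + k * ℓ := rfl
  rw [hleft] at hx₁ hx₂
  have hsep : ℓ ≤ |(jarnikScheme hR).point w - p / q| := by
    by_contra! hlt
    obtain ⟨h₁, h₂⟩ := abs_lt.1 hlt
    exact hout ⟨by linarith, by linarith⟩
  refine le_trans ?_ hsep
  have hq₂ : (R : ℝ) ^ j ≤ (q : ℝ) ^ 2 := by exact_mod_cast hj
  rw [div_eq_mul_inv, ← mul_inv]
  exact inv_anti₀ (by positivity) (by rw [pow_add, mul_comm]; gcongr)

theorem exists_rpow_le_sub_six {d : ℝ} (hd : d < 1) :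
    ∃ R : ℕ, 3 ≤ R ∧ (R : ℝ) ^ d ≤ ((R - 6 : ℕ) : ℝ) := by
  have hsmall : ∀ᶠ x : ℝ in atTop, x ^ (d - 1) < 2⁻¹ := by
    simpa using (tendsto_rpow_neg_atTop (by linarith : 0 < 1 - d)).eventually
      (gt_mem_nhds (by norm_num : (0 : ℝ) < 2⁻¹))
  obtain ⟨R, hR, hR₁₂⟩ :=
    (tendsto_natCast_atTop_atTop.eventually (hsmall.and (eventually_ge_atTop 12))).exists
  refine ⟨R, by exact_mod_cast (show (3 : ℝ) ≤ R by linarith), ?_⟩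
  have hR₀ : (0 : ℝ) < R := by linarith
  have hsplit : (R : ℝ) ^ d = (R : ℝ) ^ (d - 1) * R := by
    rw [Real.rpow_sub_one hR₀.ne', div_mul_cancel₀ _ hR₀.ne']
  rw [Nat.cast_sub (by exact_mod_cast (show (6 : ℝ) ≤ R by linarith)), hsplit]
  push_cast
  nlinarith

/-- Jarník's theorem: the set of badly approximable numbers has Hausdorff dimension `1`. -/
theorem stmt10 : dimH badApprox = 1 := by
  refine le_antisymm ((dimH_mono (subset_univ _)).trans Real.dimH_univ.le) ?_
  refine ENNReal.le_of_forall_nnreal_lt fun d hd => ?_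
  obtain ⟨R, hR, hRd⟩ := exists_rpow_le_sub_six (d := d) (by exact_mod_cast hd)
  calc (d : ℝ≥0∞) ≤ dimH (range (jarnikScheme hR).point) :=
        (jarnikScheme hR).le_dimH_range_point (by norm_cast; omega) (by simpa using hRd)
    _ ≤ dimH badApprox := dimH_mono (range_subset_iff.2 (jarnikScheme_point_mem_badApprox hR))
end

section
/- (Complex Dirichlet theorem) Given any complex number z and any positive integer N, there exist Gaussian integers p and q with 0 < |q| ≤ N such that |z − p/q| < 2/(|q|·N). Moreover, the inequality |z − p/q| < 2/|q|² holds for infinitely many pairs of Gaussian integers p, q with q ≠ 0. -/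
/-!
Minkowski's convex body theorem, applied to the lattice `ℤ[i]²` of covolume `1` in `ℂ² ≅ ℝ⁴`
and to the symmetric convex body `{(q, p) : |q| ≤ N, |zq - p| ≤ δ}` of volume `(π N δ)²`, gives a
nonzero pair `(q, p)` as soon as `π N δ > 4`. With `δ = 3 / (2N) < 2 / N` this works since
`3π/2 > 4`, and for `N ≥ 2` we have `δ < 1`, which rules out `q = 0` because nonzero Gaussian
integers have norm at least `1`; for `N = 1` take `q = 1`.

If `z = p₀/q₀`, all pairs `(k p₀, k q₀)` approximate `z` exactly. Otherwise every error
`|z - p/q|` is positive, and the first part makes it arbitrarily small along good pairs, so there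
are infinitely many of them.
-/

open MeasureTheory Metric Complex Real

lemma Int.eq_neg_floor_iff {n : ℤ} {x : ℝ} : n = -⌊x⌋ ↔ 0 ≤ n + x ∧ n + x < 1 := by
  rw [eq_comm, neg_eq_iff_eq_neg, Int.floor_eq_iff]
  push_cast
  constructor <;> rintro ⟨h₁, h₂⟩ <;> constructor <;> linarith

namespace GaussianInt

noncomputable def floor (w : ℂ) : GaussianInt := ⟨⌊w.re⌋, ⌊w.im⌋⟩

lemma norm_sub_floor_lt_two (w : ℂ) : ‖w - floor w‖ < 2 := by
  have hre : (w - floor w).re = Int.fract w.re := by simp [floor, toComplex_def]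
  have him : (w - floor w).im = Int.fract w.im := by simp [floor, toComplex_def]
  calc ‖w - floor w‖ ≤ |(w - floor w).re| + |(w - floor w).im| :=
        Complex.norm_le_abs_re_add_abs_im _
    _ < 1 + 1 := by
      rw [hre, him, abs_of_nonneg (Int.fract_nonneg _), abs_of_nonneg (Int.fract_nonneg _)]
      exact add_lt_add (Int.fract_lt_one _) (Int.fract_lt_one _)
    _ = 2 := by norm_num

lemma one_le_norm_toComplex {q : GaussianInt} (hq : q ≠ 0) : 1 ≤ ‖(q : ℂ)‖ := by
  have h : (1 : ℝ) ≤ ‖(q : ℂ)‖ ^ 2 := by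
    rw [Complex.sq_norm, ← intCast_real_norm]
    exact_mod_cast norm_pos.2 hq
  nlinarith [_root_.norm_nonneg (q : ℂ)]

def unitSquare : Set ℂ := Set.Ico 0 1 ×ℂ Set.Ico 0 1

lemma measurableSet_unitSquare : MeasurableSet unitSquare :=
  (measurableSet_Ico.preimage measurable_re).inter (measurableSet_Ico.preimage measurable_im)

lemma volume_unitSquare : volume unitSquare = 1 := by
  rw [← Complex.volume_preserving_equiv_real_prod.symm.measure_preimage
    measurableSet_unitSquare.nullMeasurableSet]
  change volume (Set.Ico (0 : ℝ) 1 ×ˢ Set.Ico (0 : ℝ) 1) = 1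
  simp [Measure.volume_eq_prod]

lemma add_mem_unitSquare_iff (g : GaussianInt) (w : ℂ) :
    (g : ℂ) + w ∈ unitSquare ↔ g = -floor w := by
  simp [unitSquare, Complex.reProdIm, Zsqrtd.ext_iff, floor, ← intCast_re, ← intCast_im,
    Int.eq_neg_floor_iff]

instance : Countable GaussianInt :=
  Function.Injective.countable (f := fun x : GaussianInt => (x.re, x.im))
    fun _ _ h => Zsqrtd.ext (congrArg Prod.fst h) (congrArg Prod.snd h)

def lattice : AddSubgroup ℂ := toComplex.range.toAddSubgroup

instance : Countable (lattice.prod lattice) :=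
  ((Set.countable_range toComplex).prod (Set.countable_range toComplex)).to_subtype

lemma isAddFundamentalDomain_lattice_prod :
    IsAddFundamentalDomain (lattice.prod lattice) (unitSquare ×ˢ unitSquare)
      ((volume : Measure ℂ).prod volume) := by
  refine IsAddFundamentalDomain.mk'
    (measurableSet_unitSquare.prod measurableSet_unitSquare).nullMeasurableSet fun x => ?_
  refine ⟨⟨(((-floor x.1 : GaussianInt) : ℂ), ((-floor x.2 : GaussianInt) : ℂ)),
    ⟨_, rfl⟩, ⟨_, rfl⟩⟩, ?_, ?_⟩
  · exact ⟨(add_mem_unitSquare_iff _ _).2 rfl, (add_mem_unitSquare_iff _ _).2 rfl⟩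
  · rintro ⟨⟨u, v⟩, ⟨a, ha⟩, ⟨b, hb⟩⟩ ⟨hu, hv⟩
    obtain rfl : u = a := ha.symm
    obtain rfl : v = b := hb.symm
    obtain rfl := (add_mem_unitSquare_iff a x.1).1 hu
    obtain rfl := (add_mem_unitSquare_iff b x.2).1 hv
    rfl

def shear (z : ℂ) : ℂ × ℂ →ₗ[ℂ] ℂ × ℂ :=
  (LinearMap.fst ℂ ℂ ℂ).prod (z • LinearMap.fst ℂ ℂ ℂ - LinearMap.snd ℂ ℂ ℂ)

@[simp] lemma shear_apply (z : ℂ) (x : ℂ × ℂ) : shear z x = (x.1, z * x.1 - x.2) := rfl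

lemma measurePreserving_shear (z : ℂ) :
    MeasurePreserving (shear z) ((volume : Measure ℂ).prod volume)
      ((volume : Measure ℂ).prod volume) :=
  (MeasurePreserving.id volume).skew_product (g := fun q p => z * q - p) (by fun_prop)
    (Filter.Eventually.of_forall fun q => (Measure.measurePreserving_sub_left volume (z * q)).map_eq)

lemma volume_shear_preimage_closedBall_prod (z : ℂ) {N δ : ℝ} (hN : 0 ≤ N) (hδ : 0 ≤ δ) :
    ((volume : Measure ℂ).prod volume) (shear z ⁻¹' (closedBall 0 N ×ˢ closedBall 0 δ)) =
      ENNReal.ofReal ((π * N * δ) ^ 2) := by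
  rw [(measurePreserving_shear z).measure_preimage
    (measurableSet_closedBall.prod measurableSet_closedBall).nullMeasurableSet,
    Measure.prod_prod, Complex.volume_closedBall, Complex.volume_closedBall,
    ← ENNReal.ofReal_coe_nnreal, NNReal.coe_real_pi, ← ENNReal.ofReal_pow hN,
    ← ENNReal.ofReal_pow hδ, ← ENNReal.ofReal_mul (by positivity),
    ← ENNReal.ofReal_mul (by positivity), ← ENNReal.ofReal_mul (by positivity)]
  ring_nf

theorem exists_ne_zero_norm_le_and_norm_mul_sub_le (z : ℂ) {N δ : ℝ} (hN : 0 ≤ N) (hδ : 0 ≤ δ)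
    (h : 4 < π * N * δ) :
    ∃ q p : GaussianInt, (q, p) ≠ 0 ∧ ‖(q : ℂ)‖ ≤ N ∧ ‖z * q - p‖ ≤ δ := by
  set K := shear z ⁻¹' (closedBall 0 N ×ˢ closedBall 0 δ)
  have h_symm : ∀ x ∈ K, -x ∈ K := by
    intro x hx
    simp only [K, Set.mem_preimage, shear_apply, Set.mem_prod, mem_closedBall_zero_iff] at hx ⊢
    simpa [neg_add_eq_sub, norm_sub_rev] using hx
  have h_conv : Convex ℝ K :=
    (convex_closedBall _ _ |>.prod (convex_closedBall _ _)).linear_preimage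
      ((shear z).restrictScalars ℝ)
  have h_vol : ((volume : Measure ℂ).prod volume) (unitSquare ×ˢ unitSquare) *
      2 ^ Module.finrank ℝ (ℂ × ℂ) < ((volume : Measure ℂ).prod volume) K := by
    rw [volume_shear_preimage_closedBall_prod z hN hδ, Measure.prod_prod, volume_unitSquare,
      Module.finrank_prod, Complex.finrank_real_complex,
      show (1 * 1 * 2 ^ (2 + 2) : ENNReal) = ENNReal.ofReal 16 by norm_num,
      ENNReal.ofReal_lt_ofReal_iff (by nlinarith)]
    nlinarith
  obtain ⟨⟨x, ⟨q, hq⟩, ⟨p, hp⟩⟩, hne, hx⟩ :=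
    exists_ne_zero_mem_lattice_of_measure_mul_two_pow_lt_measure
      isAddFundamentalDomain_lattice_prod h_symm h_conv h_vol
  obtain rfl : x = ((q : ℂ), (p : ℂ)) := Prod.ext hq.symm hp.symm
  refine ⟨q, p, fun h => hne ?_, by simpa [K] using hx⟩
  obtain ⟨rfl, rfl⟩ := Prod.mk_eq_zero.1 h
  exact Subtype.ext (by simp)

theorem exists_norm_le_and_norm_mul_sub_lt (z : ℂ) {N : ℕ} (hN : 0 < N) :
    ∃ q p : GaussianInt, q ≠ 0 ∧ ‖(q : ℂ)‖ ≤ N ∧ ‖z * q - p‖ < 2 / N := by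
  obtain rfl | hN2 : N = 1 ∨ 2 ≤ N := by omega
  · exact ⟨1, floor z, one_ne_zero, by simp, by simpa using norm_sub_floor_lt_two z⟩
  have hNR : (2 : ℝ) ≤ N := by exact_mod_cast hN2
  obtain ⟨q, p, hqp, hq, hp⟩ := exists_ne_zero_norm_le_and_norm_mul_sub_le z (N := N)
    (δ := 3 / (2 * N)) (by positivity) (by positivity)
    (by field_simp; linarith [Real.pi_gt_three])
  have hq0 : q ≠ 0 := by
    rintro rfl
    have hp0 : p ≠ 0 := fun hp0 => hqp (by simp [hp0])
    have hδ : (3 : ℝ) / (2 * N) < 1 := by rw [div_lt_one (by positivity)]; linarith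
    have := one_le_norm_toComplex hp0
    simp only [toComplex_zero, mul_zero, zero_sub, norm_neg] at hp
    linarith
  refine ⟨q, p, hq0, hq, hp.trans_lt ?_⟩
  rw [div_lt_div_iff₀ (by positivity) (by positivity)]
  nlinarith

theorem exists_norm_sub_div_lt (z : ℂ) {N : ℕ} (hN : 0 < N) :
    ∃ p q : GaussianInt, q ≠ 0 ∧ ‖(q : ℂ)‖ ≤ N ∧ ‖z - p / q‖ < 2 / (‖(q : ℂ)‖ * N) := by
  obtain ⟨q, p, hq, hqN, h⟩ := exists_norm_le_and_norm_mul_sub_lt z hN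
  have hq' : (q : ℂ) ≠ 0 := toComplex_eq_zero.not.2 hq
  refine ⟨p, q, hq, hqN, ?_⟩
  rw [show z - p / q = (z * q - p) / q by rw [sub_div, mul_div_cancel_right₀ _ hq'], norm_div,
    div_mul_eq_div_div_swap]
  exact div_lt_div_of_pos_right h (norm_pos_iff.2 hq')

def dirichletPairs (z : ℂ) : Set (GaussianInt × GaussianInt) :=
  {pq | pq.2 ≠ 0 ∧ ‖z - pq.1 / pq.2‖ < 2 / ‖(pq.2 : ℂ)‖ ^ 2}

lemma mem_dirichletPairs_of_norm_le {z : ℂ} {p q : GaussianInt} {N : ℝ} (hq : q ≠ 0)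
    (hqN : ‖(q : ℂ)‖ ≤ N) (h : ‖z - p / q‖ < 2 / (‖(q : ℂ)‖ * N)) :
    (p, q) ∈ dirichletPairs z := by
  have hq' : 0 < ‖(q : ℂ)‖ := norm_pos_iff.2 (toComplex_eq_zero.not.2 hq)
  refine ⟨hq, h.trans_le (div_le_div_of_nonneg_left zero_le_two (by positivity) ?_)⟩
  rw [sq]
  exact mul_le_mul_of_nonneg_left hqN hq'.le

lemma infinite_dirichletPairs_of_eq_div {z : ℂ} {p₀ q₀ : GaussianInt} (hq₀ : q₀ ≠ 0)
    (hz : z = p₀ / q₀) : (dirichletPairs z).Infinite := by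
  refine Set.infinite_of_injective_forall_mem
    (f := fun n : ℕ => (((n + 1 : ℕ) : GaussianInt) * p₀, ((n + 1 : ℕ) : GaussianInt) * q₀))
    (fun m n h => ?_) (fun n => ?_)
  · simpa using mul_right_cancel₀ hq₀ (congrArg Prod.snd h)
  · have hn : ((n + 1 : ℕ) : GaussianInt) ≠ 0 := Nat.cast_ne_zero.2 n.succ_ne_zero
    refine ⟨mul_ne_zero hn hq₀, ?_⟩
    rw [map_mul, map_mul, mul_div_mul_left _ _ (toComplex_eq_zero.not.2 hn), ← hz, sub_self,
      norm_zero]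
    exact div_pos two_pos (pow_pos (norm_pos_iff.2
      (mul_ne_zero (toComplex_eq_zero.not.2 hn) (toComplex_eq_zero.not.2 hq₀))) 2)

lemma infinite_dirichletPairs_of_forall_ne_div {z : ℂ}
    (hz : ∀ p q : GaussianInt, q ≠ 0 → z ≠ p / q) : (dirichletPairs z).Infinite := by
  refine Set.Infinite.of_image (fun pq => ‖z - pq.1 / pq.2‖⁻¹)
    (Set.infinite_of_forall_exists_gt fun M => ?_)
  obtain ⟨N, hMN⟩ := exists_nat_gt (2 * M)
  obtain ⟨p, q, hq, hqN, h⟩ := exists_norm_sub_div_lt z N.succ_pos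
  refine ⟨_, ⟨(p, q), mem_dirichletPairs_of_norm_le hq hqN h, rfl⟩, ?_⟩
  have he : 0 < ‖z - p / q‖ := norm_pos_iff.2 (sub_ne_zero.2 (hz p q hq))
  have h1 := one_le_norm_toComplex hq
  have hN : ‖z - p / q‖ * (N + 1 : ℕ) < 2 := by
    rw [lt_div_iff₀ (by positivity)] at h
    nlinarith
  push_cast at hN
  show M < ‖z - p / q‖⁻¹
  rw [← one_div, lt_div_iff₀ he]
  nlinarith

theorem infinite_dirichletPairs (z : ℂ) : (dirichletPairs z).Infinite := by
  by_cases hz : ∃ p q : GaussianInt, q ≠ 0 ∧ z = p / q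
  · obtain ⟨p, q, hq, rfl⟩ := hz
    exact infinite_dirichletPairs_of_eq_div hq rfl
  · push Not at hz
    exact infinite_dirichletPairs_of_forall_ne_div hz

end GaussianInt

/-- Complex Dirichlet theorem: for any `z ∈ ℂ` and positive integer `N` there are Gaussian
integers `p`, `q` with `0 < |q| ≤ N` and `|z - p/q| < 2/(|q| N)`; moreover
`|z - p/q| < 2/|q|²` holds for infinitely many pairs of Gaussian integers `p`, `q` with
`q ≠ 0`. -/
theorem stmt14 (z : ℂ) (N : ℕ) (hN : 0 < N) :
    (∃ p q : GaussianInt, 0 < ‖(q : ℂ)‖ ∧ ‖(q : ℂ)‖ ≤ N ∧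
      ‖z - (p : ℂ) / (q : ℂ)‖ < 2 / (‖(q : ℂ)‖ * N)) ∧
    {pq : GaussianInt × GaussianInt | pq.2 ≠ 0 ∧
      ‖z - (pq.1 : ℂ) / (pq.2 : ℂ)‖ < 2 / ‖(pq.2 : ℂ)‖ ^ 2}.Infinite := by
  obtain ⟨p, q, hq, hqN, h⟩ := GaussianInt.exists_norm_sub_div_lt z hN
  exact ⟨⟨p, q, norm_pos_iff.2 (GaussianInt.toComplex_eq_zero.not.2 hq), hqN, h⟩,
    GaussianInt.infinite_dirichletPairs z⟩
end

section
/- (Complex Jarník theorem) Let 𝔅 = {z ∈ ℂ : there exists K > 0 such that |z − p/q| > K/|q|² for all Gaussian integers p, q with q ≠ 0} be the set of badly approximable complex numbers. Then 𝔅 is thick: for every disc B ⊆ ℂ of positive radius, dim_H(B ∩ 𝔅) = 2. -/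
/-!
Fix `N ≥ 16` and a square of side `δ` with `4 N δ > 1`, and call a level-`n` square (side
`δ / N ^ n`) good if it misses the discs of radius `1 / (16 N |q|²)` about all `p / q` with
`|q|² ≤ N ^ n / (4 N δ)`. The rationals whose denominators become admissible at level `n + 1` are
`4 δ / N ^ n`-separated, so at most one of them threatens a good square; cutting the square into
`N × N` subsquares and discarding the `≈ N / 2` columns nearest to it leaves `M ≈ N² / 2` good
children. The nested good squares define a Cantor set inside `𝔅`, coded by the base-`M` digits
of `x ∈ [0, 1)`. The image of Lebesgue measure gives mass `≲ M ^ (-n)` to sets of diameter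
`≤ δ / N ^ n`, so by the mass distribution principle the Cantor set has dimension at least
`log M / log N`, which tends to `2` as `N → ∞`.
-/

/-- The set `𝔅` of badly approximable complex numbers: those `z` for which there is `K > 0`
with `|z - p/q| > K/|q|²` for all Gaussian integers `p`, `q` with `q ≠ 0`. -/
def badC : Set ℂ :=
  {z | ∃ K > (0 : ℝ), ∀ p q : GaussianInt, q ≠ 0 →
    K / ‖(q : ℂ)‖ ^ 2 < ‖z - (p : ℂ) / (q : ℂ)‖}

open MeasureTheory Filter Set Metric Topology
open scoped NNReal ENNReal

section MassDistribution

variable {X : Type*} [EMetricSpace X] [MeasurableSpace X] [BorelSpace X]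

theorem le_dimH_of_measure_le_mul_ediam_rpow (μ : Measure X) {A : Set X} (hA : μ A ≠ 0)
    {d : ℝ≥0} {C ε : ℝ≥0∞} (hC : C ≠ ⊤) (hε : 0 < ε)
    (h : ∀ s, ediam s ≤ ε → μ s ≤ C * ediam s ^ (d : ℝ)) : (d : ℝ≥0∞) ≤ dimH A := by
  have hle : C⁻¹ • μ ≤ μH[d] := Measure.le_hausdorffMeasure _ _ ε hε fun s hs => by
    rw [Measure.smul_apply, smul_eq_mul, mul_comm, ← div_eq_mul_inv]
    exact ENNReal.div_le_of_le_mul' (h s hs)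
  refine le_dimH_of_hausdorffMeasure_ne_zero (ne_bot_of_le_ne_bot ?_ (hle A))
  simpa [Measure.smul_apply, hC] using hA

theorem exists_pow_scale {N M δ ε d : ℝ} (hN : 1 < N) (hδ : 0 < δ) (hε : 0 < ε) (hεδ : ε ≤ δ)
    (hd : 0 ≤ d) (hNM : N ^ d ≤ M) :
    ∃ n : ℕ, ε ≤ δ / N ^ n ∧ (M ^ n)⁻¹ ≤ N ^ d / δ ^ d * ε ^ d := by
  have hN0 : 0 < N := one_pos.trans hN
  obtain ⟨n, hn, hn'⟩ := exists_nat_pow_near ((one_le_div hε).2 hεδ) hN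
  refine ⟨n, (le_div_comm₀ (by positivity) hε).1 hn, ?_⟩
  calc (M ^ n)⁻¹ ≤ ((N ^ d) ^ n)⁻¹ := by gcongr
    _ = N ^ d * ((N ^ (n + 1))⁻¹) ^ d := by
      rw [Real.inv_rpow (by positivity), ← Real.rpow_pow_comm hN0.le, pow_succ]
      field_simp
    _ ≤ N ^ d * (ε / δ) ^ d := by
      gcongr
      rw [inv_le_comm₀ (by positivity) (by positivity), inv_div]
      exact hn'.le
    _ = N ^ d / δ ^ d * ε ^ d := by
      rw [Real.div_rpow hε.le hδ.le]; ring

theorem le_dimH_of_measure_le_geometric (μ : Measure X) {A : Set X} (hA : μ A ≠ 0)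
    {d : ℝ≥0} {N M δ : ℝ} {C : ℝ≥0∞} (hC : C ≠ ⊤) (hN : 1 < N) (hδ : 0 < δ)
    (hNM : N ^ (d : ℝ) ≤ M)
    (h : ∀ (n : ℕ) (s : Set X), ediam s ≤ ENNReal.ofReal (δ / N ^ n) →
      μ s ≤ C * ENNReal.ofReal (M ^ n)⁻¹) :
    (d : ℝ≥0∞) ≤ dimH A := by
  rcases eq_or_ne d 0 with rfl | hd
  · simp
  have hM : 1 < M := (Real.one_lt_rpow hN (by positivity)).trans_le hNM
  refine le_dimH_of_measure_le_mul_ediam_rpow μ hA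
    (C := C * ENNReal.ofReal (N ^ (d : ℝ) / δ ^ (d : ℝ))) (by finiteness)
    (ENNReal.ofReal_pos.2 hδ) fun s hs => ?_
  rcases eq_or_ne (ediam s) 0 with h0 | h0
  · have hlim : Tendsto (fun n : ℕ => C * ENNReal.ofReal (M ^ n)⁻¹) atTop (𝓝 0) := by
      have : Tendsto (fun n : ℕ => (M ^ n)⁻¹) atTop (𝓝 0) :=
        tendsto_inv_atTop_zero.comp (tendsto_pow_atTop_atTop_of_one_lt hM)
      simpa using ENNReal.Tendsto.const_mul (ENNReal.tendsto_ofReal this) (Or.inr hC)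
    have : μ s ≤ 0 := ge_of_tendsto hlim (Eventually.of_forall fun n => h n s (h0 ▸ zero_le))
    exact this.trans zero_le
  have hfin : ediam s ≠ ⊤ := ne_top_of_le_ne_top ENNReal.ofReal_ne_top hs
  set ε := (ediam s).toReal
  have hsε : ediam s = ENNReal.ofReal ε := (ENNReal.ofReal_toReal hfin).symm
  have hε : 0 < ε := ENNReal.toReal_pos h0 hfin
  rw [hsε, ENNReal.ofReal_le_ofReal_iff hδ.le] at hs
  obtain ⟨n, hn, hscale⟩ := exists_pow_scale hN hδ hε hs d.coe_nonneg hNM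
  calc μ s ≤ C * ENNReal.ofReal (M ^ n)⁻¹ := h n s (hsε ▸ ENNReal.ofReal_le_ofReal hn)
    _ ≤ C * ENNReal.ofReal (N ^ (d : ℝ) / δ ^ (d : ℝ) * ε ^ (d : ℝ)) := by gcongr
    _ = C * ENNReal.ofReal (N ^ (d : ℝ) / δ ^ (d : ℝ)) * ediam s ^ (d : ℝ) := by
      rw [hsε, ENNReal.ofReal_rpow_of_pos hε, ENNReal.ofReal_mul (by positivity), mul_assoc]

end MassDistribution

theorem GaussianInt.one_le_norm_toComplex_s17 {g : GaussianInt} (hg : g ≠ 0) : 1 ≤ ‖(g : ℂ)‖ := by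
  have h : (1 : ℝ) ≤ ‖(g : ℂ)‖ ^ 2 := by
    rw [Complex.sq_norm, ← GaussianInt.intCast_real_norm]
    exact_mod_cast GaussianInt.norm_pos.2 hg
  nlinarith [_root_.norm_nonneg (g : ℂ)]

theorem GaussianInt.inv_le_norm_div_sub_div {p₁ q₁ p₂ q₂ : GaussianInt} (h₁ : q₁ ≠ 0)
    (h₂ : q₂ ≠ 0) {T : ℝ} (hT₁ : ‖(q₁ : ℂ)‖ ^ 2 ≤ T) (hT₂ : ‖(q₂ : ℂ)‖ ^ 2 ≤ T)
    (hne : (p₁ : ℂ) / q₁ ≠ (p₂ : ℂ) / q₂) :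
    T⁻¹ ≤ ‖(p₁ : ℂ) / q₁ - (p₂ : ℂ) / q₂‖ := by
  have hq₁ : (q₁ : ℂ) ≠ 0 := toComplex_eq_zero.not.2 h₁
  have hq₂ : (q₂ : ℂ) ≠ 0 := toComplex_eq_zero.not.2 h₂
  have hnum : p₁ * q₂ - p₂ * q₁ ≠ 0 := by
    contrapose! hne
    rw [div_eq_div_iff hq₁ hq₂, ← toComplex_mul, ← toComplex_mul, sub_eq_zero.1 hne]
  have hprod : ‖(q₁ : ℂ)‖ * ‖(q₂ : ℂ)‖ ≤ T := by
    nlinarith [sq_nonneg (‖(q₁ : ℂ)‖ - ‖(q₂ : ℂ)‖)]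
  have key : (p₁ : ℂ) / q₁ - (p₂ : ℂ) / q₂ =
      ((p₁ * q₂ - p₂ * q₁ : GaussianInt) : ℂ) / (q₁ * q₂) := by
    rw [toComplex_sub, toComplex_mul, toComplex_mul]; field_simp
  rw [key, norm_div, norm_mul]
  calc T⁻¹ ≤ (‖(q₁ : ℂ)‖ * ‖(q₂ : ℂ)‖)⁻¹ := by gcongr
    _ ≤ _ := by rw [inv_eq_one_div]; gcongr; exact one_le_norm_toComplex_s17 hnum

theorem Int.eq_and_eq_of_mul_add_eq_mul_add {N k k' a a' : ℤ} (ha₀ : 0 ≤ a) (ha : a < N)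
    (ha₀' : 0 ≤ a') (ha' : a' < N) (h : N * k + a = N * k' + a') : k = k' ∧ a = a' := by
  have hN : 0 < N := by omega
  obtain ⟨h₁, h₂⟩ := (Int.ediv_emod_unique hN).2 ⟨(add_comm _ _).trans h, ha₀, ha⟩
  obtain ⟨h₁', h₂'⟩ := (Int.ediv_emod_unique hN).2 ⟨add_comm _ _, ha₀', ha'⟩
  exact ⟨h₁.symm.trans h₁', h₂.symm.trans h₂'⟩

noncomputable section

section Grid

def gridInterval (x s : ℝ) (k : ℤ) : Set ℝ := Icc (x + k * s) (x + (k + 1) * s)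

def gridSquare (z₀ : ℂ) (s : ℝ) (k : ℤ × ℤ) : Set ℂ :=
  gridInterval z₀.re s k.1 ×ℂ gridInterval z₀.im s k.2

def gridCorner (z₀ : ℂ) (s : ℝ) (k : ℤ × ℤ) : ℂ := ⟨z₀.re + k.1 * s, z₀.im + k.2 * s⟩

variable {x s : ℝ} {z₀ : ℂ}

theorem mem_gridInterval_floor (hs : 0 < s) (y : ℝ) : y ∈ gridInterval x s ⌊(y - x) / s⌋ := by
  have h₁ := Int.floor_le ((y - x) / s)
  have h₂ := Int.lt_floor_add_one ((y - x) / s)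
  rw [le_div_iff₀ hs] at h₁
  rw [div_lt_iff₀ hs] at h₂
  constructor <;> linarith

theorem gridInterval_div_subset {N : ℕ} (hs : 0 ≤ s) (k : ℤ) {a : ℤ} (ha₀ : 0 ≤ a)
    (ha : a < N) : gridInterval x (s / N) (N * k + a) ⊆ gridInterval x s k := by
  have hN : (0 : ℝ) < N := by exact_mod_cast ha₀.trans_lt ha
  have ha₀' : (0 : ℝ) ≤ a := by exact_mod_cast ha₀
  have ha' : (a : ℝ) + 1 ≤ N := by exact_mod_cast ha
  apply Icc_subset_Icc <;> push_cast <;> field_simp <;> nlinarith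

theorem abs_sub_le_of_mem_gridInterval {k : ℤ} {u v : ℝ} (hu : u ∈ gridInterval x s k)
    (hv : v ∈ gridInterval x s k) : |u - v| ≤ s := by
  obtain ⟨hu₁, hu₂⟩ := hu
  obtain ⟨hv₁, hv₂⟩ := hv
  rw [abs_sub_le_iff]
  constructor <;> linarith

theorem sub_one_mul_le_abs_sub_of_mem_gridInterval {a b : ℤ} {u v : ℝ}
    (hu : u ∈ gridInterval x s a) (hv : v ∈ gridInterval x s b) :
    ((|a - b| - 1 : ℤ) : ℝ) * s ≤ |u - v| := by
  obtain ⟨hu₁, hu₂⟩ := hu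
  obtain ⟨hv₁, hv₂⟩ := hv
  rcases le_total a b with hab | hab
  · rw [abs_of_nonpos (sub_nonpos.2 hab), abs_sub_comm]
    push_cast
    linarith [le_abs_self (v - u)]
  · rw [abs_of_nonneg (sub_nonneg.2 hab)]
    push_cast
    linarith [le_abs_self (u - v)]

theorem isClosed_gridSquare (z₀ : ℂ) (s : ℝ) (k : ℤ × ℤ) : IsClosed (gridSquare z₀ s k) :=
  isClosed_Icc.reProdIm isClosed_Icc

theorem gridSquare_div_subset {N : ℕ} (hs : 0 ≤ s) (k : ℤ × ℤ) {a b : ℤ}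
    (ha₀ : 0 ≤ a) (ha : a < N) (hb₀ : 0 ≤ b) (hb : b < N) :
    gridSquare z₀ (s / N) (N * k.1 + a, N * k.2 + b) ⊆ gridSquare z₀ s k := fun _ hz =>
  ⟨gridInterval_div_subset hs k.1 ha₀ ha hz.1,
    gridInterval_div_subset hs k.2 hb₀ hb hz.2⟩

theorem norm_sub_le_of_mem_gridSquare {k : ℤ × ℤ} {z z' : ℂ} (hz : z ∈ gridSquare z₀ s k)
    (hz' : z' ∈ gridSquare z₀ s k) : ‖z - z'‖ ≤ 2 * s := by
  have h₁ := abs_sub_le_of_mem_gridInterval hz.1 hz'.1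
  have h₂ := abs_sub_le_of_mem_gridInterval hz.2 hz'.2
  calc ‖z - z'‖ ≤ |(z - z').re| + |(z - z').im| := Complex.norm_le_abs_re_add_abs_im _
    _ ≤ 2 * s := by rw [Complex.sub_re, Complex.sub_im]; linarith

theorem gridCorner_mem_gridSquare (hs : 0 ≤ s) (k : ℤ × ℤ) :
    gridCorner z₀ s k ∈ gridSquare z₀ s k :=
  ⟨⟨le_rfl, by simp [gridCorner]; linarith⟩, ⟨le_rfl, by simp [gridCorner]; linarith⟩⟩

def gridBlock (z₀ : ℂ) (s : ℝ) (u : ℂ) : Finset (ℤ × ℤ) :=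
  Finset.Icc (⌊(u.re - z₀.re) / s⌋ - 2) (⌊(u.re - z₀.re) / s⌋ + 2) ×ˢ
    Finset.Icc (⌊(u.im - z₀.im) / s⌋ - 2) (⌊(u.im - z₀.im) / s⌋ + 2)

theorem card_gridBlock (z₀ : ℂ) (s : ℝ) (u : ℂ) : (gridBlock z₀ s u).card = 25 := by
  have h : ∀ a : ℤ, (a + 2 + 1 - (a - 2)).toNat = 5 := fun a => by omega
  rw [gridBlock, Finset.card_product, Int.card_Icc, Int.card_Icc, h, h]

theorem abs_sub_floor_le_two_of_mem_gridInterval (hs : 0 < s) {k : ℤ} {y u : ℝ}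
    (hy : y ∈ gridInterval x s k) (hyu : |y - u| ≤ s) : |k - ⌊(u - x) / s⌋| ≤ 2 := by
  have h := (sub_one_mul_le_abs_sub_of_mem_gridInterval hy (mem_gridInterval_floor hs u)).trans hyu
  have : ((|k - ⌊(u - x) / s⌋| - 1 : ℤ) : ℝ) ≤ 1 := le_of_mul_le_mul_right (by linarith) hs
  have : |k - ⌊(u - x) / s⌋| - 1 ≤ 1 := by exact_mod_cast this
  omega

theorem mem_gridBlock_of_mem_gridSquare (hs : 0 < s) {k : ℤ × ℤ} {z u : ℂ}
    (hz : z ∈ gridSquare z₀ s k) (hzu : ‖z - u‖ ≤ s) : k ∈ gridBlock z₀ s u := by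
  have hre := abs_sub_floor_le_two_of_mem_gridInterval hs hz.1
    ((Complex.sub_re z u ▸ Complex.abs_re_le_norm (z - u)).trans hzu)
  have him := abs_sub_floor_le_two_of_mem_gridInterval hs hz.2
    ((Complex.sub_im z u ▸ Complex.abs_im_le_norm (z - u)).trans hzu)
  rw [abs_le] at hre him
  rw [gridBlock, Finset.mem_product, Finset.mem_Icc, Finset.mem_Icc]
  omega

end Grid

namespace Jarnik

variable (N : ℕ) (δ : ℝ) (z₀ : ℂ)

def side (n : ℕ) : ℝ := δ / N ^ n

def threshold (n : ℕ) : ℝ := N ^ n / (4 * N * δ)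

def badConst : ℝ := (16 * N)⁻¹

def square (n : ℕ) (k : ℤ × ℤ) : Set ℂ := gridSquare z₀ (side N δ n) k

def IsGood (n : ℕ) (k : ℤ × ℤ) : Prop :=
  ∀ p q : GaussianInt, q ≠ 0 → ‖(q : ℂ)‖ ^ 2 ≤ threshold N δ n →
    ∀ z ∈ square N δ z₀ n k, badConst N / ‖(q : ℂ)‖ ^ 2 < ‖z - (p : ℂ) / q‖

def dangerSet (n : ℕ) (k : ℤ × ℤ) : Set ℂ :=
  {v | (∃ p q : GaussianInt, q ≠ 0 ∧ ‖(q : ℂ)‖ ^ 2 ≤ threshold N δ (n + 1) ∧ v = (p : ℂ) / q) ∧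
    ∃ z ∈ square N δ z₀ n k, ‖z - v‖ ≤ side N δ n / 4}

-- Arbitrary when `dangerSet` is empty; the choice of columns is then irrelevant.
def dangerPoint (n : ℕ) (k : ℤ × ℤ) : ℂ := Classical.epsilon (· ∈ dangerSet N δ z₀ n k)

def dangerColumn (n : ℕ) (k : ℤ × ℤ) : ℤ :=
  ⌊((dangerPoint N δ z₀ n k).re - z₀.re) / side N δ (n + 1)⌋ - N * k.1

def gap : ℕ := N / 4 + 2

def numColumns : ℕ := N - 2 * gap N

def numChildren : ℕ := numColumns N * N

-- The `numColumns N` columns kept among `0, …, N - 1`: all but the `2 * gap N - 1` columns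
-- centred at column `t`.
def column (t : ℤ) (j : ℕ) : ℤ := if j ≤ t - gap N then j else j + (2 * gap N - 1)

-- The `i`-th kept child of square `k` lies in kept column `i / N` and row `i % N`;
-- `dangerColumn` is counted from the parent's first column.
def child (n : ℕ) (k : ℤ × ℤ) (i : ℕ) : ℤ × ℤ :=
  (N * k.1 + column N (dangerColumn N δ z₀ n k) (i / N), N * k.2 + (i % N : ℕ))

def address : ℕ → ℕ → ℤ × ℤ
  | 0, _ => 0
  | n + 1, m => child N δ z₀ n (address n (m / numChildren N)) (m % numChildren N)

-- For `x ∈ [0, 1)`, the first `n` base-`numChildren N` digits of `x`; `address` reads them as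
-- a path of kept children.
def digits (n : ℕ) (x : ℝ) : ℕ := ⌊x * numChildren N ^ n⌋₊

def cell (n : ℕ) (x : ℝ) : ℤ × ℤ := address N δ z₀ n (digits N n x)

def codingMap (x : ℝ) : ℂ :=
  limUnder atTop fun n => gridCorner z₀ (side N δ n) (cell N δ z₀ n x)

def cantorMeasure : Measure ℂ := (volume.restrict (Ico 0 1)).map (codingMap N δ z₀)

variable {N δ z₀}

theorem side_pos (hN : 0 < N) (hδ : 0 < δ) (n : ℕ) : 0 < side N δ n := by
  unfold side; positivity

theorem side_succ (n : ℕ) : side N δ (n + 1) = side N δ n / N := by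
  rw [side, side, pow_succ, div_div]

theorem threshold_succ (hN : 0 < N) (n : ℕ) : threshold N δ (n + 1) = (4 * side N δ n)⁻¹ := by
  rw [threshold, side, pow_succ]
  field_simp

theorem badConst_div_threshold (hN : 0 < N) (n : ℕ) :
    badConst N / threshold N δ n = side N δ n / 4 := by
  rw [badConst, threshold, side]
  field_simp
  ring

theorem exists_le_threshold (hN : 1 < N) (hδ : 0 < δ) (T : ℝ) : ∃ n, T ≤ threshold N δ n := by
  obtain ⟨n, hn⟩ := pow_unbounded_of_one_lt (T * (4 * N * δ)) (Nat.one_lt_cast.2 hN)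
  exact ⟨n, (le_div_iff₀ (by positivity)).2 hn.le⟩

theorem side_div_four_le (hN : 0 < N) (hδ : 0 ≤ δ) (n : ℕ) :
    side N δ n / 4 ≤ (gap N - 1 : ℝ) * side N δ (n + 1) := by
  have hgap : (N : ℝ) / 4 ≤ gap N - 1 := by
    have : N + 4 ≤ 4 * gap N := by unfold gap; omega
    have : (N : ℝ) + 4 ≤ 4 * gap N := by exact_mod_cast this
    linarith
  have hside : 0 ≤ side N δ (n + 1) := by unfold side; positivity
  calc side N δ n / 4 = (N / 4 : ℝ) * side N δ (n + 1) := by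
        rw [side_succ]; field_simp
    _ ≤ (gap N - 1 : ℝ) * side N δ (n + 1) := by gcongr

theorem column_nonneg (t : ℤ) (j : ℕ) : 0 ≤ column N t j := by
  unfold column gap; split_ifs <;> omega

theorem column_lt (t : ℤ) {j : ℕ} (hj : j < numColumns N) : column N t j < N := by
  unfold column numColumns at *; split_ifs <;> omega

theorem column_injective (t : ℤ) : Function.Injective (column N t) := by
  intro j j' h
  unfold column gap at h; split_ifs at h <;> omega

theorem gap_le_abs_column_sub (t : ℤ) (j : ℕ) : (gap N : ℤ) ≤ |column N t j - t| := by
  rw [le_abs]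
  unfold column; split_ifs <;> omega

theorem square_child_subset (hδ : 0 ≤ δ) (n : ℕ) (k : ℤ × ℤ) {i : ℕ} (hi : i < numChildren N) :
    square N δ z₀ (n + 1) (child N δ z₀ n k i) ⊆ square N δ z₀ n k := by
  have hN : 0 < N := Nat.pos_of_mul_pos_left (hi.trans_le' (Nat.zero_le i))
  rw [square, side_succ]
  exact gridSquare_div_subset (by unfold side; positivity) k (column_nonneg _ _)
    (column_lt _ ((Nat.div_lt_iff_lt_mul hN).2 hi)) (Int.natCast_nonneg _)
    (by exact_mod_cast Nat.mod_lt i hN)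

theorem dangerSet_subsingleton (hN : 0 < N) (hδ : 0 < δ) (n : ℕ) (k : ℤ × ℤ) :
    (dangerSet N δ z₀ n k).Subsingleton := by
  rintro _ ⟨⟨p₁, q₁, hq₁, hT₁, rfl⟩, z₁, hz₁, hd₁⟩ _ ⟨⟨p₂, q₂, hq₂, hT₂, rfl⟩, z₂, hz₂, hd₂⟩
  by_contra hne
  have hsep := GaussianInt.inv_le_norm_div_sub_div hq₁ hq₂ hT₁ hT₂ hne
  rw [threshold_succ hN, inv_inv] at hsep
  have hz := norm_sub_le_of_mem_gridSquare hz₁ hz₂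
  have := side_pos hN hδ n
  have htri := norm_sub_le_norm_sub_add_norm_sub ((p₁ : ℂ) / q₁) z₁ ((p₂ : ℂ) / q₂)
  have htri' := norm_sub_le_norm_sub_add_norm_sub z₁ z₂ ((p₂ : ℂ) / q₂)
  rw [norm_sub_rev _ z₁] at htri
  linarith

theorem dangerPoint_eq (hN : 0 < N) (hδ : 0 < δ) {n : ℕ} {k : ℤ × ℤ} {v : ℂ}
    (hv : v ∈ dangerSet N δ z₀ n k) : dangerPoint N δ z₀ n k = v :=
  dangerSet_subsingleton hN hδ n k (Classical.epsilon_spec ⟨v, hv⟩) hv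

theorem side_div_four_le_abs_re_sub_dangerPoint (hN : 0 < N) (hδ : 0 < δ) {n : ℕ}
    {k : ℤ × ℤ} {i : ℕ} {z : ℂ} (hz : z ∈ square N δ z₀ (n + 1) (child N δ z₀ n k i)) :
    side N δ n / 4 ≤ |z.re - (dangerPoint N δ z₀ n k).re| := by
  set t := dangerColumn N δ z₀ n k
  have hv : (dangerPoint N δ z₀ n k).re ∈ gridInterval z₀.re (side N δ (n + 1)) (N * k.1 + t) := by
    rw [show N * k.1 + t = _ from add_sub_cancel _ _]
    exact mem_gridInterval_floor (side_pos hN hδ _) _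
  have hfar := sub_one_mul_le_abs_sub_of_mem_gridInterval hz.1 hv
  simp only [child, add_sub_add_left_eq_sub] at hfar
  have hgap : (gap N - 1 : ℝ) ≤ ((|column N t (i / N) - t| - 1 : ℤ) : ℝ) := by
    exact_mod_cast sub_le_sub_right (gap_le_abs_column_sub t (i / N)) 1
  calc side N δ n / 4 ≤ (gap N - 1 : ℝ) * side N δ (n + 1) := side_div_four_le hN hδ.le n
    _ ≤ _ := mul_le_mul_of_nonneg_right hgap (side_pos hN hδ _).le
    _ ≤ _ := hfar

theorem IsGood.child (hN : 0 < N) (hδ : 0 < δ) {n : ℕ} {k : ℤ × ℤ}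
    (hk : IsGood N δ z₀ n k) {i : ℕ} (hi : i < numChildren N) :
    IsGood N δ z₀ (n + 1) (child N δ z₀ n k i) := by
  intro p q hq hqT z hz
  have hzk := square_child_subset hδ.le n k hi hz
  by_cases hsmall : ‖(q : ℂ)‖ ^ 2 ≤ threshold N δ n
  · exact hk p q hq hsmall z hzk
  -- Otherwise the disc about `p / q` is too small to reach the child unless `p / q` is the
  -- parent's dangerous point, whose column the children avoid.
  by_contra! hclose
  have hrad : badConst N / ‖(q : ℂ)‖ ^ 2 < side N δ n / 4 := by
    rw [← badConst_div_threshold hN]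
    exact div_lt_div_of_pos_left (by unfold badConst; positivity)
      (by unfold threshold; positivity) (not_le.1 hsmall)
  have hv : (p : ℂ) / q ∈ dangerSet N δ z₀ n k :=
    ⟨⟨p, q, hq, hqT, rfl⟩, z, hzk, hclose.trans hrad.le⟩
  have hfar := side_div_four_le_abs_re_sub_dangerPoint hN hδ hz
  rw [dangerPoint_eq hN hδ hv, ← Complex.sub_re] at hfar
  linarith [Complex.abs_re_le_norm (z - p / q)]

theorem isGood_zero (hNδ : 1 < 4 * N * δ) (k : ℤ × ℤ) : IsGood N δ z₀ 0 k := by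
  intro p q hq hqT
  have h₁ : 1 ≤ ‖(q : ℂ)‖ ^ 2 := one_le_pow₀ (GaussianInt.one_le_norm_toComplex_s17 hq)
  have h₂ : threshold N δ 0 < 1 := by
    rw [threshold, pow_zero, div_lt_one (by linarith)]; exact hNδ
  linarith

theorem eq_and_eq_of_child_eq_child {n : ℕ} {k k' : ℤ × ℤ} {i i' : ℕ}
    (hi : i < numChildren N) (hi' : i' < numChildren N)
    (h : child N δ z₀ n k i = child N δ z₀ n k' i') : k = k' ∧ i = i' := by
  have hN : 0 < N := Nat.pos_of_mul_pos_left (hi.trans_le' (Nat.zero_le i))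
  have hNi : ∀ {i}, i < numChildren N → i / N < numColumns N := (Nat.div_lt_iff_lt_mul hN).2
  obtain ⟨hk₁, hcol⟩ := Int.eq_and_eq_of_mul_add_eq_mul_add (column_nonneg _ _)
    (column_lt _ (hNi hi)) (column_nonneg _ _) (column_lt _ (hNi hi')) (congrArg Prod.fst h)
  obtain ⟨hk₂, hmod⟩ := Int.eq_and_eq_of_mul_add_eq_mul_add (Int.natCast_nonneg _)
    (by exact_mod_cast Nat.mod_lt i hN) (Int.natCast_nonneg _)
    (by exact_mod_cast Nat.mod_lt i' hN) (congrArg Prod.snd h)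
  obtain rfl : k = k' := Prod.ext hk₁ hk₂
  refine ⟨rfl, ?_⟩
  rw [← Nat.div_add_mod i N, ← Nat.div_add_mod i' N, column_injective _ hcol]
  rw [Int.natCast_inj.1 hmod]

theorem mul_self_le_eight_mul_numChildren (hN : 16 ≤ N) : N * N ≤ 8 * numChildren N := by
  rw [numChildren, ← mul_assoc]
  exact Nat.mul_le_mul_right N (by unfold numColumns gap; omega)

theorem numChildren_pos (hN : 16 ≤ N) : 0 < numChildren N := by
  have := mul_self_le_eight_mul_numChildren hN
  nlinarith

theorem isGood_address (hN : 16 ≤ N) (hδ : 0 < δ) (hNδ : 1 < 4 * N * δ) (n m : ℕ) :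
    IsGood N δ z₀ n (address N δ z₀ n m) := by
  induction n generalizing m with
  | zero => exact isGood_zero hNδ _
  | succ n ih => exact (ih _).child (by omega) hδ (Nat.mod_lt _ (numChildren_pos hN))

theorem address_injOn (hN : 16 ≤ N) (n : ℕ) :
    Set.InjOn (address N δ z₀ n) (Iio (numChildren N ^ n)) := by
  have hM := numChildren_pos hN
  induction n with
  | zero => intro m hm m' hm' _; simp_all
  | succ n ih =>
    intro m hm m' hm' h
    obtain ⟨hk, hi⟩ := eq_and_eq_of_child_eq_child (Nat.mod_lt _ hM) (Nat.mod_lt _ hM) h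
    have hdiv : m / numChildren N = m' / numChildren N := by
      refine ih ?_ ?_ hk <;> rw [mem_Iio, Nat.div_lt_iff_lt_mul hM, ← pow_succ] <;> assumption
    rw [← Nat.div_add_mod m (numChildren N), ← Nat.div_add_mod m' (numChildren N), hdiv, hi]

theorem digits_succ_div (hN : 16 ≤ N) (n : ℕ) (x : ℝ) :
    digits N (n + 1) x / numChildren N = digits N n x := by
  have hM : (numChildren N : ℝ) ≠ 0 := by exact_mod_cast (numChildren_pos hN).ne'
  rw [digits, digits, ← Nat.floor_div_natCast, pow_succ, ← mul_assoc, mul_div_cancel_right₀ _ hM]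

theorem digits_lt (hN : 16 ≤ N) (n : ℕ) {x : ℝ} (hx : x < 1) :
    digits N n x < numChildren N ^ n := by
  have hM := pow_pos (numChildren_pos hN) n
  rw [digits, Nat.floor_lt' hM.ne', Nat.cast_pow]
  exact mul_lt_of_lt_one_left (by exact_mod_cast hM) hx

theorem measurable_digits (n : ℕ) : Measurable (digits N n) :=
  (measurable_id.mul_const _).nat_floor

theorem cell_succ (hN : 16 ≤ N) (n : ℕ) (x : ℝ) :
    cell N δ z₀ (n + 1) x =
      child N δ z₀ n (cell N δ z₀ n x) (digits N (n + 1) x % numChildren N) := by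
  rw [cell, cell, address, digits_succ_div hN]

theorem antitone_square_cell (hN : 16 ≤ N) (hδ : 0 ≤ δ) (x : ℝ) :
    Antitone fun n => square N δ z₀ n (cell N δ z₀ n x) :=
  antitone_nat_of_succ_le fun n => by
    rw [cell_succ hN]; exact square_child_subset hδ n _ (Nat.mod_lt _ (numChildren_pos hN))

theorem gridCorner_mem_square_cell (hN : 0 < N) (hδ : 0 < δ) (n : ℕ) (x : ℝ) :
    gridCorner z₀ (side N δ n) (cell N δ z₀ n x) ∈ square N δ z₀ n (cell N δ z₀ n x) :=
  gridCorner_mem_gridSquare (side_pos hN hδ n).le _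

theorem tendsto_codingMap (hN : 16 ≤ N) (hδ : 0 < δ) (x : ℝ) :
    Tendsto (fun n => gridCorner z₀ (side N δ n) (cell N δ z₀ n x)) atTop
      (𝓝 (codingMap N δ z₀ x)) := by
  refine CauchySeq.tendsto_limUnder (cauchySeq_of_le_geometric (N : ℝ)⁻¹ (2 * δ)
    (inv_lt_one_of_one_lt₀ (by norm_cast; omega)) fun n => ?_)
  have hN0 : 0 < N := by omega
  rw [dist_eq_norm]
  calc _ ≤ 2 * side N δ n := norm_sub_le_of_mem_gridSquare
        (gridCorner_mem_square_cell hN0 hδ n x)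
        (antitone_square_cell hN hδ.le x n.le_succ (gridCorner_mem_square_cell hN0 hδ _ x))
    _ = 2 * δ * (N : ℝ)⁻¹ ^ n := by rw [side, inv_pow, div_eq_mul_inv, mul_assoc]

theorem codingMap_mem_square (hN : 16 ≤ N) (hδ : 0 < δ) (n : ℕ) (x : ℝ) :
    codingMap N δ z₀ x ∈ square N δ z₀ n (cell N δ z₀ n x) :=
  (isClosed_gridSquare _ _ _).mem_of_tendsto (tendsto_codingMap hN hδ x)
    ((eventually_ge_atTop n).mono fun _ hm =>
      antitone_square_cell hN hδ.le x hm (gridCorner_mem_square_cell (by omega) hδ _ x))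

theorem codingMap_mem_badC (hN : 16 ≤ N) (hδ : 0 < δ) (hNδ : 1 < 4 * N * δ) (x : ℝ) :
    codingMap N δ z₀ x ∈ badC := by
  refine ⟨badConst N, by unfold badConst; positivity, fun p q hq => ?_⟩
  obtain ⟨n, hn⟩ := exists_le_threshold (N := N) (by omega) hδ (‖(q : ℂ)‖ ^ 2)
  exact isGood_address hN hδ hNδ n _ p q hq hn _ (codingMap_mem_square hN hδ n x)

theorem measurable_codingMap (hN : 16 ≤ N) (hδ : 0 < δ) : Measurable (codingMap N δ z₀) :=
  measurable_of_tendsto_metrizable' atTop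
    (fun n => (measurable_from_top (f := fun m =>
      gridCorner z₀ (side N δ n) (address N δ z₀ n m))).comp (measurable_digits n))
    (tendsto_pi_nhds.2 (tendsto_codingMap hN hδ))

theorem volume_setOf_cell_eq_le (hN : 16 ≤ N) (n : ℕ) (j : ℤ × ℤ) :
    volume.restrict (Ico (0 : ℝ) 1) {x | cell N δ z₀ n x = j} ≤
      ENNReal.ofReal (numChildren N ^ n)⁻¹ := by
  set b : ℝ := numChildren N ^ n
  have hb : 0 < b := pow_pos (by exact_mod_cast numChildren_pos hN) n
  have hmeas : MeasurableSet {x | cell N δ z₀ n x = j} :=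
    measurable_digits n (MeasurableSet.of_discrete (s := {m | address N δ z₀ n m = j}))
  rw [Measure.restrict_apply hmeas]
  rcases ({x | cell N δ z₀ n x = j} ∩ Ico 0 1).eq_empty_or_nonempty with h | ⟨x₀, hx₀, hx₀'⟩
  · simp [h]
  set m := digits N n x₀
  have hsub : {x | cell N δ z₀ n x = j} ∩ Ico 0 1 ⊆ Ico (m / b) ((m + 1) / b) := by
    rintro x ⟨hx, hx₁, hx₂⟩
    have hm : digits N n x = m := address_injOn hN n (digits_lt hN n hx₂)
      (digits_lt hN n hx₀'.2) (hx.trans hx₀.symm)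
    rw [digits, Nat.floor_eq_iff (by positivity)] at hm
    exact ⟨(div_le_iff₀ hb).2 hm.1, (lt_div_iff₀ hb).2 hm.2⟩
  calc _ ≤ volume (Ico (m / b) ((m + 1) / b)) := measure_mono hsub
    _ = ENNReal.ofReal b⁻¹ := by rw [Real.volume_Ico]; congr 1; field_simp; ring

theorem cantorMeasure_le_of_ediam_le (hN : 16 ≤ N) (hδ : 0 < δ) (n : ℕ) {U : Set ℂ}
    (hU : ediam U ≤ ENNReal.ofReal (side N δ n)) :
    cantorMeasure N δ z₀ U ≤ 25 * ENNReal.ofReal (numChildren N ^ n)⁻¹ := by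
  rcases U.eq_empty_or_nonempty with rfl | ⟨u, hu⟩
  · simp
  have hside := side_pos (N := N) (by omega) hδ n
  have hpre : codingMap N δ z₀ ⁻¹' closure U ⊆
      ⋃ j ∈ gridBlock z₀ (side N δ n) u, {x | cell N δ z₀ n x = j} := by
    intro x hx
    have hxu : ‖codingMap N δ z₀ x - u‖ ≤ side N δ n := by
      rw [← dist_eq_norm, ← ENNReal.ofReal_le_ofReal_iff hside.le, ← edist_dist]
      exact (edist_le_ediam_of_mem (mem_preimage.1 hx) (subset_closure hu)).trans
        ((ediam_closure U).trans_le hU)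
    exact mem_iUnion₂.2
      ⟨_, mem_gridBlock_of_mem_gridSquare hside (codingMap_mem_square hN hδ n x) hxu, rfl⟩
  calc cantorMeasure N δ z₀ U ≤ cantorMeasure N δ z₀ (closure U) := measure_mono subset_closure
    _ = volume.restrict (Ico (0 : ℝ) 1) (codingMap N δ z₀ ⁻¹' closure U) :=
      Measure.map_apply (measurable_codingMap hN hδ) isClosed_closure.measurableSet
    _ ≤ ∑ j ∈ gridBlock z₀ (side N δ n) u,
          volume.restrict (Ico (0 : ℝ) 1) {x | cell N δ z₀ n x = j} :=
      (measure_mono hpre).trans (measure_biUnion_finset_le _ _)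
    _ ≤ ∑ _j ∈ gridBlock z₀ (side N δ n) u, ENNReal.ofReal (numChildren N ^ n)⁻¹ :=
      Finset.sum_le_sum fun j _ => volume_setOf_cell_eq_le hN n j
    _ = 25 * ENNReal.ofReal (numChildren N ^ n)⁻¹ := by
      rw [Finset.sum_const, card_gridBlock, nsmul_eq_mul]; norm_num

theorem one_le_cantorMeasure (hN : 16 ≤ N) (hδ : 0 < δ) {A : Set ℂ}
    (hA : ∀ x, codingMap N δ z₀ x ∈ A) : 1 ≤ cantorMeasure N δ z₀ A := by
  have h := Measure.le_map_apply (μ := volume.restrict (Ico (0 : ℝ) 1))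
    (measurable_codingMap (z₀ := z₀) hN hδ).aemeasurable A
  have hpre : codingMap N δ z₀ ⁻¹' A = univ := eq_univ_of_forall hA
  rwa [hpre, Measure.restrict_apply_univ, Real.volume_Ico, sub_zero,
    ENNReal.ofReal_one] at h

theorem dist_codingMap_le (hN : 16 ≤ N) (hδ : 0 < δ) (x : ℝ) :
    dist (codingMap N δ z₀ x) z₀ ≤ 2 * δ := by
  have h := norm_sub_le_of_mem_gridSquare (codingMap_mem_square (z₀ := z₀) hN hδ 0 x)
    (gridCorner_mem_square_cell (by omega) hδ 0 x)
  have hcorner : gridCorner z₀ (side N δ 0) (cell N δ z₀ 0 x) = z₀ := by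
    simp [gridCorner, cell, address]
  rwa [hcorner, side, pow_zero, div_one, ← dist_eq_norm] at h

theorem le_dimH_ball_inter_badC (c : ℂ) {r : ℝ} (hr : 0 < r) {d : ℝ≥0} (hd : (d : ℝ) < 2) :
    (d : ℝ≥0∞) ≤ dimH (ball c r ∩ badC) := by
  obtain ⟨N, hN, hNr, hN8⟩ : ∃ N : ℕ, 16 ≤ N ∧ 1 < N * r ∧ 8 ≤ (N : ℝ) ^ (2 - d : ℝ) :=
    ((eventually_ge_atTop 16).and
      (((tendsto_natCast_atTop_atTop.atTop_mul_const hr).eventually_gt_atTop 1).and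
        (((tendsto_rpow_atTop (sub_pos.2 hd)).comp
          tendsto_natCast_atTop_atTop).eventually_ge_atTop 8))).exists
  set δ := r / 4 with hδr
  have hδ : 0 < δ := by positivity
  have hNδ : 1 < 4 * N * δ := by rwa [show 4 * N * δ = N * r by ring]
  have hN0 : (0 : ℝ) < N := by positivity
  have hNM : (N : ℝ) ^ (d : ℝ) ≤ numChildren N := by
    have hNN : (N : ℝ) * N ≤ 8 * numChildren N := by
      exact_mod_cast mul_self_le_eight_mul_numChildren hN
    have hsplit : (N : ℝ) ^ (d : ℝ) * N ^ (2 - d : ℝ) = N * N := by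
      rw [← Real.rpow_add hN0, add_sub_cancel, Real.rpow_two, sq]
    nlinarith [Real.rpow_pos_of_pos hN0 (d : ℝ)]
  have hmem : ∀ x, codingMap N δ c x ∈ ball c r ∩ badC := fun x =>
    ⟨(dist_codingMap_le hN hδ x).trans_lt (by rw [hδr]; linarith), codingMap_mem_badC hN hδ hNδ x⟩
  exact le_dimH_of_measure_le_geometric (cantorMeasure N δ c)
    (zero_lt_one.trans_le (one_le_cantorMeasure hN hδ hmem)).ne' (C := 25) (by norm_num)
    (by norm_cast; omega) hδ hNM fun n _ hs => cantorMeasure_le_of_ediam_le hN hδ n hs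

end Jarnik

end

/-- Complex Jarník theorem: `𝔅` is thick, i.e. every disc of positive radius meets `𝔅` in a
set of Hausdorff dimension `2`. -/
theorem stmt17 (c : ℂ) (r : ℝ) (hr : 0 < r) :
    dimH (Metric.ball c r ∩ badC) = 2 := by
  refine le_antisymm ?_ (ENNReal.le_of_forall_nnreal_lt fun d hd =>
    Jarnik.le_dimH_ball_inter_badC c hr (by exact_mod_cast hd))
  calc dimH (Metric.ball c r ∩ badC) ≤ dimH (univ : Set ℂ) := dimH_mono (subset_univ _)
    _ = 2 := by rw [Real.dimH_univ_eq_finrank, Complex.finrank_real_complex]; rfl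
end
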